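/- arXiv:1910.13521 — 9 statements merged into one kernel-verified Lean document; each statement's English description precedes it below -/
import Mathlib

section
/- For K initial experts and m nights where d_i experts die on night i, with A = K - sum_{i=1}^m d_i experts never dying (A ≥ 1), the number of effective orderings (orderings with pairwise distinct behaviors) equals A · ∏_{s=1}^m (d_s + 1). -/
namespace DyingExperts

variable {K m : ℕ}

/-- A function is `Good` if it is pointwise alive and only changes value when
the current value dies. -/
def Good (death : Fin K → ℕ) (f : Fin (m+1) → Fin K) : Prop :=
  (∀ s : Fin (m+1), death (f s) = 0 ∨ (s : ℕ) + 1 ≤ death (f s)) ∧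
  (∀ s : Fin m, (death (f s.castSucc) = 0 ∨ (s : ℕ) + 2 ≤ death (f s.castSucc)) →
      f s.succ = f s.castSucc)

instance (death : Fin K → ℕ) : DecidablePred (Good (m := m) death) := fun _ => by
  unfold Good; infer_instance

/-- While the chosen expert stays alive, the choice is constant. -/
lemma constancy {death : Fin K → ℕ} {f : Fin (m+1) → Fin K} (hf : Good death f)
    (s : Fin (m+1)) :
    ∀ n (hn : n < m+1), (s : ℕ) ≤ n →
      (death (f s) = 0 ∨ n + 1 ≤ death (f s)) → f ⟨n, hn⟩ = f s := by
  intro n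
  induction n with
  | zero =>
    intro hn hs _
    congr 1
    exact Fin.ext (show 0 = (s:ℕ) by omega)
  | succ n ih =>
    intro hn hs hal
    rcases Nat.lt_or_ge (s : ℕ) (n+1) with h | h
    · have hn' : n < m + 1 := by omega
      have hm : n < m := by omega
      have hfn : f ⟨n, hn'⟩ = f s := by
        refine ih hn' (by omega) ?_
        rcases hal with h' | h'
        · exact Or.inl h'
        · exact Or.inr (by omega)
      have hcast : (⟨n, hm⟩ : Fin m).castSucc = ⟨n, hn'⟩ := Fin.ext rfl
      have hsucc : (⟨n, hm⟩ : Fin m).succ = ⟨n+1, hn⟩ := Fin.ext rfl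
      have := hf.2 ⟨n, hm⟩ (by
        rw [hcast, hfn]
        rcases hal with h' | h'
        · exact Or.inl h'
        · exact Or.inr (by simp at h' ⊢; omega))
      rw [hsucc, hcast, hfn] at this
      exact this
    · congr 1
      exact Fin.ext (show n + 1 = (s:ℕ) by omega)

/-- For every `Good` function there is a permutation realizing it as a minimal
alive choice. -/
lemma exists_perm {death : Fin K → ℕ} {f : Fin (m+1) → Fin K} (hf : Good death f) :
    ∃ π : Equiv.Perm (Fin K), ∀ s : Fin (m+1), ∀ b : Fin K,
      (death b = 0 ∨ (s : ℕ) + 1 ≤ death b) →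
      (∀ e : Fin K, (death e = 0 ∨ (s : ℕ) + 1 ≤ death e) → π.symm b ≤ π.symm e) →
      b = f s := by
  classical
  set key : Fin K → ℕ := fun e =>
    if h : ∃ n, ∃ hn : n < m+1, f ⟨n, hn⟩ = e then Nat.find h else m + 1 with hkey
  refine ⟨Tuple.sort key, ?_⟩
  intro s b hb hmin
  by_contra hne
  -- key (f s) ≤ s
  have hex : ∃ n, ∃ hn : n < m+1, f ⟨n, hn⟩ = f s := ⟨s, s.2, by simp⟩
  have h1 : key (f s) ≤ (s : ℕ) := by
    simp only [hkey]
    rw [dif_pos hex]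
    exact Nat.find_le ⟨s.2, by simp⟩
  -- key b > s
  have h2 : (s : ℕ) < key b := by
    simp only [hkey]
    split
    · rename_i h
      obtain ⟨hn, hfb⟩ := Nat.find_spec h
      by_contra hle
      push_neg at hle
      have hc := constancy hf ⟨Nat.find h, hn⟩ (s : ℕ) s.2 hle (by simp only [hfb]; exact hb)
      exact hne (by rw [← hfb, ← hc])
    · omega
  -- strict order from sort
  have hlt : (Tuple.sort key).symm (f s) < (Tuple.sort key).symm b := by
    by_contra hle
    push_neg at hle
    have := Tuple.monotone_sort key hle
    simp only [Function.comp_apply, Equiv.apply_symm_apply] at this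
    omega
  have := hmin (f s) (hf.1 s)
  omega

/-- Backward construction: `bk j` is the value at time `m - j`. -/
def bk (death : Fin K → ℕ) (a : Fin K) (c : (s : Fin m) → Option (Fin K)) : ℕ → Fin K
  | 0 => a
  | j+1 => if h : j < m then (c ⟨m - (j+1), by omega⟩).getD (bk death a c j) else a

end DyingExperts

namespace DyingExperts

section Backward

variable {K m : ℕ} (death : Fin K → ℕ) (a : Fin K) (c : (s : Fin m) → Option (Fin K))

/-- `gfun` reads off `bk` at time `m - s`. -/
def gfun : Fin (m+1) → Fin K := fun s => bk death a c (m - (s : ℕ))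

lemma bk_succ (j : ℕ) (h : j < m) :
    bk death a c (j+1) = (c ⟨m - (j+1), by omega⟩).getD (bk death a c j) := by
  simp [bk, h]

lemma gfun_last : gfun death a c (Fin.last m) = a := by
  simp [gfun, bk]

lemma gfun_step (s : Fin m) :
    gfun death a c s.castSucc = (c s).getD (gfun death a c s.succ) := by
  have hs := s.2
  have h1 : m - ((s.castSucc : Fin (m+1)) : ℕ) = (m - ((s : ℕ)+1)) + 1 := by
    simp only [Fin.coe_castSucc]; omega
  have hj : m - ((s : ℕ)+1) < m := by omega
  have h2 : (⟨m - ((m - ((s : ℕ)+1))+1), by omega⟩ : Fin m) = s := Fin.ext (by simp; omega)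
  have h3 : m - ((s.succ : Fin (m+1)) : ℕ) = m - ((s : ℕ)+1) := by
    simp only [Fin.val_succ]
  rw [gfun, gfun, h1, h3, bk_succ death a c _ hj, h2]

variable (ha : death a = 0) (hc : ∀ s e, c s = some e → death e = (s : ℕ) + 1)

include ha hc in
lemma bk_alive : ∀ j, j ≤ m →
    death (bk death a c j) = 0 ∨ (m - j) + 1 ≤ death (bk death a c j) := by
  intro j
  induction j with
  | zero => intro _; exact Or.inl (by simpa [bk] using ha)
  | succ j ih =>
    intro hj
    rw [bk_succ death a c j (by omega)]
    rcases hcc : c ⟨m - (j+1), by omega⟩ with _ | e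
    · simp only [hcc, Option.getD_none]
      rcases ih (by omega) with h | h
      · exact Or.inl h
      · exact Or.inr (by omega)
    · simp only [hcc, Option.getD_some]
      have := hc _ e hcc
      exact Or.inr (by simp at this; omega)

include ha hc in
lemma gfun_alive : ∀ s : Fin (m+1),
    death (gfun death a c s) = 0 ∨ (s : ℕ) + 1 ≤ death (gfun death a c s) := by
  intro s
  have hs : (s : ℕ) ≤ m := by omega
  have := bk_alive death a c ha hc (m - (s : ℕ)) (by omega)
  have hms : m - (m - (s : ℕ)) = (s : ℕ) := by omega
  rw [hms] at this
  exact this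

include ha hc in
lemma gfun_good : Good death (gfun death a c) := by
  constructor
  · exact gfun_alive death a c ha hc
  · intro s hal
    rcases hcc : c s with _ | e
    · rw [gfun_step, hcc, Option.getD_none]
    · rw [gfun_step, hcc, Option.getD_some] at hal
      have := hc _ e hcc
      omega

end Backward

end DyingExperts

namespace DyingExperts

variable {K m : ℕ}

lemma good_last {death : Fin K → ℕ} (hdm : ∀ e, death e ≤ m)
    {f : Fin (m+1) → Fin K} (hf : Good death f) : death (f (Fin.last m)) = 0 := by
  have := hf.1 (Fin.last m)
  have := hdm (f (Fin.last m))
  simp only [Fin.val_last] at *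
  omega

lemma good_change {death : Fin K → ℕ} {f : Fin (m+1) → Fin K} (hf : Good death f)
    (s : Fin m) (h : f s.succ ≠ f s.castSucc) : death (f s.castSucc) = (s : ℕ) + 1 := by
  have h1 := hf.1 s.castSucc
  have h2 := hf.2 s
  simp only [Fin.coe_castSucc] at h1
  by_contra hne
  exact h (h2 (by omega))

/-- The equivalence between good functions and (final expert, change data). -/
noncomputable def goodEquiv (death : Fin K → ℕ) (hdm : ∀ e, death e ≤ m) :
    {f : Fin (m+1) → Fin K // Good death f} ≃
      ({e : Fin K // death e = 0} ×
        ((s : Fin m) → Option {e : Fin K // death e = (s : ℕ) + 1})) where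
  toFun := fun ⟨f, hf⟩ =>
    ⟨⟨f (Fin.last m), good_last hdm hf⟩,
      fun s => if h : f s.succ = f s.castSucc then none
        else some ⟨f s.castSucc, good_change hf s h⟩⟩
  invFun := fun ⟨a, c⟩ =>
    ⟨gfun death a.1 (fun s => (c s).map Subtype.val),
      gfun_good death a.1 _ a.2 (by
        intro s e he
        rcases hcc : c s with _ | e'
        · rw [hcc] at he; simp at he
        · rw [hcc] at he; simp at he; rw [← he]; exact e'.2)⟩
  left_inv := by
    rintro ⟨f, hf⟩
    apply Subtype.ext
    funext s
    set c' : (s : Fin m) → Option (Fin K) := fun s =>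
      Option.map Subtype.val (if h : f s.succ = f s.castSucc then
        (none : Option {e : Fin K // death e = (s : ℕ) + 1})
        else some ⟨f s.castSucc, good_change hf s h⟩) with hc'
    have key : ∀ j, j ≤ m → bk death (f (Fin.last m)) c' j = f ⟨m - j, by omega⟩ := by
      intro j
      induction j with
      | zero =>
        intro _
        simp only [bk]
        exact congrArg f (Fin.ext (by simp))
      | succ j ih =>
        intro hj
        rw [bk_succ death _ c' j (by omega)]
        set s' : Fin m := ⟨m - (j+1), by omega⟩ with hs'
        have hsucc : (s'.succ : Fin (m+1)) = ⟨m - j, by omega⟩ := Fin.ext (by simp [hs']; omega)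
        have hcast : (s'.castSucc : Fin (m+1)) = ⟨m - (j+1), by omega⟩ := Fin.ext (by simp [hs'])
        by_cases h : f s'.succ = f s'.castSucc
        · have : c' s' = none := by simp [hc', h]
          rw [this, Option.getD_none, ih (by omega), ← hsucc, h, hcast]
        · have : c' s' = some (f s'.castSucc) := by simp [hc', h]
          rw [this, Option.getD_some, hcast]
    show gfun death (f (Fin.last m)) c' s = f s
    rw [gfun, key (m - (s : ℕ)) (by omega)]
    exact congrArg f (Fin.ext (by simp; omega))
  right_inv := by
    rintro ⟨a, c⟩
    have hcv : ∀ (s : Fin m) (e : Fin K),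
        Option.map (Subtype.val) (c s) = some e → death e = (s : ℕ) + 1 := by
      intro s e he
      rcases hcc : c s with _ | e'
      · rw [hcc] at he; simp at he
      · rw [hcc] at he; simp at he; rw [← he]; exact e'.2
    refine Prod.ext ?_ ?_
    · dsimp only
      exact Subtype.ext (gfun_last death a.1 _)
    · dsimp only
      funext s
      rcases hcc : c s with _ | e
      · have h0 : Option.map (Subtype.val) (c s) = none := by simp [hcc]
        have hgs := gfun_step death a.1 (fun s => Option.map (Subtype.val) (c s)) s
        rw [h0, Option.getD_none] at hgs
        rw [dif_pos hgs.symm]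
      · have h0 : Option.map (Subtype.val) (c s) = some e.1 := by simp [hcc]
        have hstep := gfun_step death a.1 (fun s => Option.map (Subtype.val) (c s)) s
        rw [h0, Option.getD_some] at hstep
        have hne : gfun death a.1 (fun s => Option.map (Subtype.val) (c s)) s.succ ≠
            gfun death a.1 (fun s => Option.map (Subtype.val) (c s)) s.castSucc := by
          rw [hstep]
          intro hcon
          have h1 := gfun_alive death a.1 (fun s => Option.map (Subtype.val) (c s)) a.2 hcv s.succ
          rw [hcon] at h1
          have := e.2
          simp only [Fin.val_succ] at h1
          omega
        rw [dif_neg hne]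
        exact congrArg some (Subtype.ext hstep)

lemma card_good (death : Fin K → ℕ) (hdm : ∀ e, death e ≤ m) :
    (Finset.univ.filter (Good (m := m) death)).card =
      (Finset.univ.filter fun e : Fin K => death e = 0).card *
        ∏ s : Fin m, ((Finset.univ.filter fun e : Fin K => death e = (s : ℕ) + 1).card + 1) := by
  classical
  rw [← Fintype.card_subtype]
  rw [Fintype.card_congr (goodEquiv death hdm)]
  rw [Fintype.card_prod, Fintype.card_pi]
  congr 1
  · rw [Fintype.card_subtype]
  · refine Finset.prod_congr rfl fun s _ => ?_
    rw [Fintype.card_option, Fintype.card_subtype]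

end DyingExperts

/-- **Number of effective orderings in the dying experts setting.**
Experts are `Fin K`.  `death e = 0` means expert `e` never dies; `death e = s`
with `1 ≤ s ≤ m` means `e` dies at the end of day `s`.  There are `m + 1` days;
on day `s` (represented by `s : Fin (m+1)`, the actual day being `s.1 + 1`)
expert `e` is alive iff `death e = 0 ∨ s.1 + 1 ≤ death e`.  An ordering is a
permutation `π` of the experts and its behavior `beh π` picks, on each day, the
alive expert occurring first in `π` (minimal position `π.symm`).  The number of
distinct behaviors (= number of effective orderings) is `A · ∏_{s=1}^m (d_s+1)`,
where `A` is the number of experts that never die and `d_s` the number dying on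
night `s`. -/
theorem number_of_effective_orderings
    (K m : ℕ) (death : Fin K → ℕ)
    (hdm : ∀ e, death e ≤ m)
    (hnight : ∀ s, 1 ≤ s → s ≤ m → ∃ e, death e = s)
    (hA : 1 ≤ (Finset.univ.filter fun e : Fin K => death e = 0).card)
    (beh : Equiv.Perm (Fin K) → Fin (m + 1) → Fin K)
    (hbeh : ∀ (π : Equiv.Perm (Fin K)) (s : Fin (m + 1)),
      (death (beh π s) = 0 ∨ (s : ℕ) + 1 ≤ death (beh π s)) ∧
      ∀ e : Fin K, (death e = 0 ∨ (s : ℕ) + 1 ≤ death e) →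
        π.symm (beh π s) ≤ π.symm e) :
    ((Finset.univ : Finset (Equiv.Perm (Fin K))).image beh).card
      = (Finset.univ.filter fun e : Fin K => death e = 0).card *
        ∏ s ∈ Finset.Icc 1 m,
          ((Finset.univ.filter fun e : Fin K => death e = s).card + 1) := by
  classical
  have himg : (Finset.univ : Finset (Equiv.Perm (Fin K))).image beh
      = Finset.univ.filter (DyingExperts.Good death) := by
    ext f
    simp only [Finset.mem_image, Finset.mem_filter, Finset.mem_univ, true_and]
    constructor
    · rintro ⟨π, -, rfl⟩
      refine ⟨fun s => (hbeh π s).1, ?_⟩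
      intro s hal
      have h1 : death (beh π s.succ) = 0 ∨ ((s.castSucc : Fin (m+1)) : ℕ) + 1 ≤
          death (beh π s.succ) := by
        have := (hbeh π s.succ).1
        simp only [Fin.val_succ, Fin.coe_castSucc] at *
        omega
      have h2 := (hbeh π s.castSucc).2 _ h1
      have h3 : death (beh π s.castSucc) = 0 ∨ ((s.succ : Fin (m+1)) : ℕ) + 1 ≤
          death (beh π s.castSucc) := by
        simp only [Fin.val_succ, Fin.coe_castSucc] at *
        omega
      have h4 := (hbeh π s.succ).2 _ h3
      exact π.symm.injective (le_antisymm h4 h2)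
    · intro hf
      obtain ⟨π, hπ⟩ := DyingExperts.exists_perm hf
      refine ⟨π, ?_⟩
      funext s
      exact hπ s (beh π s) (hbeh π s).1 (hbeh π s).2
  rw [himg, DyingExperts.card_good death hdm]
  congr 1
  rw [Fin.prod_univ_eq_prod_range
    (fun i => (Finset.univ.filter fun e : Fin K => death e = i + 1).card + 1) m]
  rw [← Finset.Ico_add_one_right_eq_Icc, Finset.prod_Ico_eq_prod_range]
  refine Finset.prod_congr (by simp) fun i _ => by rw [Nat.add_comm 1 i]
end

section
/- The minimax regret of decision-theoretic online learning with K experts, T rounds, and losses in [0,1] is at least (1/(2L)) · min( √(2T log K), 2T ) for a universal constant L. -/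
open Finset

/-- Factorize a sum over a function space at one coordinate, when `F` does not
depend on that coordinate. -/
lemma coord_factor {ι γ : Type*} [Fintype ι] [DecidableEq ι] [Fintype γ]
    (t : ι) (h : γ → ℝ) (F : (ι → γ) → ℝ)
    (hF : ∀ ω c, F (Function.update ω t c) = F ω) :
    (Fintype.card γ : ℝ) * ∑ ω : ι → γ, h (ω t) * F ω
      = (∑ c, h c) * ∑ ω : ι → γ, F ω := by
  have hinv : Function.Involutive
      (fun p : γ × (ι → γ) => (p.2 t, Function.update p.2 t p.1)) := by
    intro p
    refine Prod.ext ?_ ?_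
    · simp
    · funext j
      by_cases hj : j = t
      · subst hj; simp
      · simp [Function.update_of_ne hj]
  have key : ∑ p : γ × (ι → γ), h p.1 * F (Function.update p.2 t p.1)
      = ∑ p : γ × (ι → γ), h (p.2 t) * F p.2 := by
    rw [← Equiv.sum_comp (hinv.toPerm _) (fun p : γ × (ι → γ) => h p.1 * F (Function.update p.2 t p.1))]
    refine Finset.sum_congr rfl fun p _ => ?_
    show h (p.2 t) * F (Function.update (Function.update p.2 t p.1) t (p.2 t))
        = h (p.2 t) * F p.2
    rw [hF, hF]
  have lhs : ∑ p : γ × (ι → γ), h (p.2 t) * F p.2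
      = (Fintype.card γ : ℝ) * ∑ ω : ι → γ, h (ω t) * F ω := by
    rw [Fintype.sum_prod_type]
    simp [Finset.sum_const, card_univ, nsmul_eq_mul]
  have rhs : ∑ p : γ × (ι → γ), h p.1 * F (Function.update p.2 t p.1)
      = (∑ c, h c) * ∑ ω : ι → γ, F ω := by
    rw [Fintype.sum_prod_type, Finset.sum_mul_sum]
    refine Finset.sum_congr rfl fun c _ => Finset.sum_congr rfl fun ω _ => ?_
    rw [hF]
  rw [← lhs, key.symm, rhs]

noncomputable section DTOLAux

/-- indicator value of a Bool -/
def vB (b : Bool) : ℝ := if b then 1 else 0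

/-- one step of the difference walk -/
def gstep (c : Bool × Bool) : ℝ := vB c.1 - vB c.2

lemma sum_gstep_pow_one : ∑ c : Bool × Bool, gstep c ^ 1 = 0 := by
  rw [Fintype.sum_prod_type]; simp [gstep, vB]

lemma sum_gstep_pow_two : ∑ c : Bool × Bool, gstep c ^ 2 = 2 := by
  rw [Fintype.sum_prod_type]; simp [Fintype.sum_bool, gstep, vB]; norm_num

lemma sum_gstep_pow_three : ∑ c : Bool × Bool, gstep c ^ 3 = 0 := by
  rw [Fintype.sum_prod_type]; simp [Fintype.sum_bool, gstep, vB]; norm_num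

lemma sum_gstep_pow_four : ∑ c : Bool × Bool, gstep c ^ 4 = 2 := by
  rw [Fintype.sum_prod_type]; simp [Fintype.sum_bool, gstep, vB]; norm_num

variable {ι : Type*} [Fintype ι] [DecidableEq ι]

/-- difference walk over a set of coordinates -/
def Dw (s : Finset ι) (ω : ι → Bool × Bool) : ℝ := ∑ t ∈ s, gstep (ω t)

lemma Dw_update {s : Finset ι} {t : ι} (ht : t ∉ s) (ω : ι → Bool × Bool) (c : Bool × Bool) :
    Dw s (Function.update ω t c) = Dw s ω := by
  unfold Dw
  refine Finset.sum_congr rfl fun x hx => ?_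
  rw [Function.update_of_ne (by rintro rfl; exact ht hx)]

lemma Dw_insert {s : Finset ι} {t : ι} (ht : t ∉ s) (ω : ι → Bool × Bool) :
    Dw (insert t s) ω = gstep (ω t) + Dw s ω := Finset.sum_insert ht

lemma sum_one_omega : ∑ _ω : ι → Bool × Bool, (1:ℝ) = (Fintype.card (ι → Bool × Bool) : ℝ) := by
  simp [Finset.sum_const, card_univ]

lemma cross_term (t : ι) (s : Finset ι) (ht : t ∉ s) (a b : ℕ) :
    (4:ℝ) * ∑ ω : ι → Bool × Bool, gstep (ω t) ^ a * (Dw s ω) ^ b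
      = (∑ c : Bool × Bool, gstep c ^ a) * ∑ ω : ι → Bool × Bool, (Dw s ω) ^ b := by
  have := coord_factor t (fun c => gstep c ^ a) (fun ω => (Dw s ω) ^ b)
      (fun ω c => by
        show Dw s (Function.update ω t c) ^ b = Dw s ω ^ b
        rw [Dw_update ht])
  simpa using this

lemma moment_one (s : Finset ι) : ∑ ω : ι → Bool × Bool, Dw s ω = 0 := by
  classical
  induction s using Finset.induction_on with
  | empty => simp [Dw]
  | @insert t s ht ih =>
    have expand : ∀ ω : ι → Bool × Bool,
        Dw (insert t s) ω = gstep (ω t) ^ 1 * (Dw s ω) ^ 0 + Dw s ω := by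
      intro ω; rw [Dw_insert ht]; ring
    rw [Finset.sum_congr rfl fun ω _ => expand ω, Finset.sum_add_distrib, ih]
    have h := cross_term t s ht 1 0
    rw [sum_gstep_pow_one] at h
    have : ∑ ω : ι → Bool × Bool, gstep (ω t) ^ 1 * (Dw s ω) ^ 0 = 0 := by linarith
    rw [this]; ring

lemma moment_two (s : Finset ι) :
    ∑ ω : ι → Bool × Bool, (Dw s ω) ^ 2
      = (s.card : ℝ) / 2 * (Fintype.card (ι → Bool × Bool) : ℝ) := by
  classical
  induction s using Finset.induction_on with
  | empty => simp [Dw]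
  | @insert t s ht ih =>
    have expand : ∀ ω : ι → Bool × Bool,
        (Dw (insert t s) ω) ^ 2 = gstep (ω t) ^ 2 * (Dw s ω) ^ 0
          + 2 * (gstep (ω t) ^ 1 * (Dw s ω) ^ 1) + (Dw s ω) ^ 2 := by
      intro ω; rw [Dw_insert ht]; ring
    rw [Finset.sum_congr rfl fun ω _ => expand ω, Finset.sum_add_distrib,
      Finset.sum_add_distrib, ih, ← Finset.mul_sum]
    have h2 := cross_term t s ht 2 0
    have h1 := cross_term t s ht 1 1
    rw [sum_gstep_pow_two] at h2
    rw [sum_gstep_pow_one] at h1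
    simp only [pow_zero, mul_one, pow_one] at h2 h1 ⊢
    rw [sum_one_omega] at h2
    have e2 : ∑ ω : ι → Bool × Bool, gstep (ω t) ^ 2
        = (Fintype.card (ι → Bool × Bool) : ℝ) / 2 := by linarith
    have e1 : ∑ ω : ι → Bool × Bool, gstep (ω t) * Dw s ω = 0 := by linarith
    rw [e2, e1, Finset.card_insert_of_notMem ht]
    push_cast
    ring

lemma moment_three (s : Finset ι) : ∑ ω : ι → Bool × Bool, (Dw s ω) ^ 3 = 0 := by
  classical
  induction s using Finset.induction_on with
  | empty => simp [Dw]
  | @insert t s ht ih =>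
    have expand : ∀ ω : ι → Bool × Bool,
        (Dw (insert t s) ω) ^ 3 = gstep (ω t) ^ 3 * (Dw s ω) ^ 0
          + 3 * (gstep (ω t) ^ 2 * (Dw s ω) ^ 1)
          + 3 * (gstep (ω t) ^ 1 * (Dw s ω) ^ 2) + (Dw s ω) ^ 3 := by
      intro ω; rw [Dw_insert ht]; ring
    rw [Finset.sum_congr rfl fun ω _ => expand ω, Finset.sum_add_distrib,
      Finset.sum_add_distrib, Finset.sum_add_distrib, ih, ← Finset.mul_sum, ← Finset.mul_sum]
    have h3 := cross_term t s ht 3 0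
    have h2 := cross_term t s ht 2 1
    have h1 := cross_term t s ht 1 2
    rw [sum_gstep_pow_three] at h3
    rw [sum_gstep_pow_two] at h2
    rw [sum_gstep_pow_one] at h1
    have m1 := moment_one (ι := ι) s
    simp only [pow_one] at h2 m1
    rw [m1] at h2
    have e3 : ∑ ω : ι → Bool × Bool, gstep (ω t) ^ 3 * (Dw s ω) ^ 0 = 0 := by linarith
    have e2 : ∑ ω : ι → Bool × Bool, gstep (ω t) ^ 2 * (Dw s ω) ^ 1 = 0 := by
      simp only [pow_one]; linarith
    have e1 : ∑ ω : ι → Bool × Bool, gstep (ω t) ^ 1 * (Dw s ω) ^ 2 = 0 := by linarith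
    rw [e3, e2, e1]; ring

lemma moment_four (s : Finset ι) :
    ∑ ω : ι → Bool × Bool, (Dw s ω) ^ 4
      ≤ 3 / 4 * (s.card : ℝ) ^ 2 * (Fintype.card (ι → Bool × Bool) : ℝ) := by
  classical
  induction s using Finset.induction_on with
  | empty => simp [Dw]
  | @insert t s ht ih =>
    have expand : ∀ ω : ι → Bool × Bool,
        (Dw (insert t s) ω) ^ 4 = gstep (ω t) ^ 4 * (Dw s ω) ^ 0
          + 4 * (gstep (ω t) ^ 3 * (Dw s ω) ^ 1)
          + 6 * (gstep (ω t) ^ 2 * (Dw s ω) ^ 2)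
          + 4 * (gstep (ω t) ^ 1 * (Dw s ω) ^ 3) + (Dw s ω) ^ 4 := by
      intro ω; rw [Dw_insert ht]; ring
    rw [Finset.sum_congr rfl fun ω _ => expand ω]
    rw [Finset.sum_add_distrib, Finset.sum_add_distrib, Finset.sum_add_distrib,
      Finset.sum_add_distrib, ← Finset.mul_sum, ← Finset.mul_sum, ← Finset.mul_sum]
    have h4 := cross_term t s ht 4 0
    have h3 := cross_term t s ht 3 1
    have h2 := cross_term t s ht 2 2
    have h1 := cross_term t s ht 1 3
    rw [sum_gstep_pow_four] at h4
    rw [sum_gstep_pow_three] at h3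
    rw [sum_gstep_pow_two] at h2
    rw [sum_gstep_pow_one] at h1
    simp only [pow_zero, mul_one, pow_one] at h4 h3 h2 h1 ⊢
    rw [sum_one_omega] at h4
    have m2 := moment_two (ι := ι) s
    have m3 := moment_three (ι := ι) s
    rw [m2] at h2
    rw [m3] at h1
    set N : ℝ := (Fintype.card (ι → Bool × Bool) : ℝ) with hN
    have hN0 : (0:ℝ) ≤ N := by positivity
    have e4 : ∑ ω : ι → Bool × Bool, gstep (ω t) ^ 4 = N / 2 := by linarith
    have e3 : ∑ ω : ι → Bool × Bool, gstep (ω t) ^ 3 * Dw s ω = 0 := by linarith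
    have e2 : ∑ ω : ι → Bool × Bool, gstep (ω t) ^ 2 * Dw s ω ^ 2
        = (s.card : ℝ) / 4 * N := by linarith
    have e1 : ∑ ω : ι → Bool × Bool, gstep (ω t) * Dw s ω ^ 3 = 0 := by linarith
    rw [e4, e3, e2, e1, Finset.card_insert_of_notMem ht]
    push_cast
    nlinarith [Nat.cast_nonneg (α := ℝ) s.card]

end DTOLAux
section DTOLAbs

open Finset

variable {ι : Type*} [Fintype ι] [DecidableEq ι]

lemma abs_moment_lower (s : Finset ι) :
    Real.sqrt ((s.card : ℝ) / 6) * (Fintype.card (ι → Bool × Bool) : ℝ)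
      ≤ ∑ ω : ι → Bool × Bool, |Dw s ω| := by
  classical
  set N : ℝ := (Fintype.card (ι → Bool × Bool) : ℝ) with hNdef
  have hN : 0 < N := by
    have h : 0 < Fintype.card (ι → Bool × Bool) := Fintype.card_pos
    rw [hNdef]; exact_mod_cast h
  set k : ℝ := (s.card : ℝ) with hkdef
  rcases Nat.eq_zero_or_pos s.card with hk0 | hk1
  · rw [hkdef, hk0]
    simp only [Nat.cast_zero, zero_div, Real.sqrt_zero, zero_mul]
    exact Finset.sum_nonneg fun ω _ => abs_nonneg _
  have hk : (1:ℝ) ≤ k := by rw [hkdef]; exact_mod_cast hk1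
  set A : ℝ := ∑ ω : ι → Bool × Bool, |Dw s ω| with hA
  set A3 : ℝ := ∑ ω : ι → Bool × Bool, |Dw s ω| ^ 3 with hA3
  set B : ℝ := ∑ ω : ι → Bool × Bool, (Dw s ω) ^ 2 with hB
  set C : ℝ := ∑ ω : ι → Bool × Bool, (Dw s ω) ^ 4 with hC
  have hBval : B = k / 2 * N := moment_two s
  have hCval : C ≤ 3 / 4 * k ^ 2 * N := moment_four s
  have hBpos : 0 < B := by rw [hBval]; positivity
  have hCnn : 0 ≤ C := Finset.sum_nonneg fun ω _ => by positivity
  have hA3nn : 0 ≤ A3 := Finset.sum_nonneg fun ω _ => by positivity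
  -- Cauchy--Schwarz 1 : B^2 ≤ A * A3
  have cs1 : B ^ 2 ≤ A * A3 := by
    have := Finset.sum_mul_sq_le_sq_mul_sq Finset.univ
      (fun ω : ι → Bool × Bool => Real.sqrt |Dw s ω|)
      (fun ω : ι → Bool × Bool => |Dw s ω| * Real.sqrt |Dw s ω|)
    have e1 : ∑ ω : ι → Bool × Bool,
        Real.sqrt |Dw s ω| * (|Dw s ω| * Real.sqrt |Dw s ω|) = B := by
      rw [hB]
      refine Finset.sum_congr rfl fun ω _ => ?_
      have h := Real.mul_self_sqrt (abs_nonneg (Dw s ω))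
      calc Real.sqrt |Dw s ω| * (|Dw s ω| * Real.sqrt |Dw s ω|)
          = |Dw s ω| * (Real.sqrt |Dw s ω| * Real.sqrt |Dw s ω|) := by ring
        _ = |Dw s ω| * |Dw s ω| := by rw [h]
        _ = (Dw s ω) ^ 2 := by rw [← sq_abs]; ring
    have e2 : ∑ ω : ι → Bool × Bool, Real.sqrt |Dw s ω| ^ 2 = A := by
      rw [hA]
      exact Finset.sum_congr rfl fun ω _ => Real.sq_sqrt (abs_nonneg _)
    have e3 : ∑ ω : ι → Bool × Bool, (|Dw s ω| * Real.sqrt |Dw s ω|) ^ 2 = A3 := by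
      rw [hA3]
      refine Finset.sum_congr rfl fun ω _ => ?_
      rw [mul_pow, Real.sq_sqrt (abs_nonneg _)]
      ring
    rw [e1, e2, e3] at this
    exact this
  -- Cauchy--Schwarz 2 : A3^2 ≤ B * C
  have cs2 : A3 ^ 2 ≤ B * C := by
    have := Finset.sum_mul_sq_le_sq_mul_sq Finset.univ
      (fun ω : ι → Bool × Bool => |Dw s ω|)
      (fun ω : ι → Bool × Bool => (Dw s ω) ^ 2)
    have e1 : ∑ ω : ι → Bool × Bool, |Dw s ω| * (Dw s ω) ^ 2 = A3 := by
      rw [hA3]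
      refine Finset.sum_congr rfl fun ω _ => ?_
      rw [← sq_abs]; ring
    have e2 : ∑ ω : ι → Bool × Bool, |Dw s ω| ^ 2 = B := by
      rw [hB]
      exact Finset.sum_congr rfl fun ω _ => sq_abs _
    have e3 : ∑ ω : ι → Bool × Bool, ((Dw s ω) ^ 2) ^ 2 = C := by
      rw [hC]
      exact Finset.sum_congr rfl fun ω _ => by ring
    rw [e1, e2, e3] at this
    exact this
  have hA3pos : 0 < A3 := by
    rcases lt_or_eq_of_le hA3nn with h | h
    · exact h
    · exfalso
      have : B ^ 2 ≤ 0 := by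
        have hAnn : 0 ≤ A := Finset.sum_nonneg fun ω _ => abs_nonneg _
        calc B ^ 2 ≤ A * A3 := cs1
          _ = 0 := by rw [← h]; ring
      nlinarith
  -- A3 ≤ √B * √C
  have hA3le : A3 ≤ Real.sqrt B * Real.sqrt C := by
    rw [← Real.sqrt_mul hBpos.le]
    rw [show A3 = Real.sqrt (A3 ^ 2) from (Real.sqrt_sq hA3nn).symm]
    exact Real.sqrt_le_sqrt cs2
  -- √(k/6) * N * √C ≤ B * √B
  have key : Real.sqrt (k / 6) * N * Real.sqrt C ≤ B * Real.sqrt B := by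
    have l1 : Real.sqrt (k / 6) * N * Real.sqrt C = Real.sqrt (k / 6 * N ^ 2 * C) := by
      rw [Real.sqrt_mul (by positivity), Real.sqrt_mul (by positivity : (0:ℝ) ≤ k / 6),
        Real.sqrt_sq hN.le]
    have l2 : B * Real.sqrt B = Real.sqrt (B ^ 3) := by
      rw [show B ^ 3 = B ^ 2 * B by ring, Real.sqrt_mul (by positivity), Real.sqrt_sq hBpos.le]
    rw [l1, l2]
    apply Real.sqrt_le_sqrt
    have : k / 6 * N ^ 2 * C ≤ k / 6 * N ^ 2 * (3 / 4 * k ^ 2 * N) := by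
      apply mul_le_mul_of_nonneg_left hCval (by positivity)
    calc k / 6 * N ^ 2 * C ≤ k / 6 * N ^ 2 * (3 / 4 * k ^ 2 * N) := this
      _ = (k / 2 * N) ^ 3 := by ring
      _ = B ^ 3 := by rw [hBval]
  -- combine
  have final : Real.sqrt (k / 6) * N * A3 ≤ A * A3 := by
    calc Real.sqrt (k / 6) * N * A3
        ≤ Real.sqrt (k / 6) * N * (Real.sqrt B * Real.sqrt C) := by
          apply mul_le_mul_of_nonneg_left hA3le (by positivity)
      _ = (Real.sqrt (k / 6) * N * Real.sqrt C) * Real.sqrt B := by ring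
      _ ≤ (B * Real.sqrt B) * Real.sqrt B := by
          apply mul_le_mul_of_nonneg_right key (Real.sqrt_nonneg _)
      _ = B * (Real.sqrt B * Real.sqrt B) := by ring
      _ = B * B := by rw [Real.mul_self_sqrt hBpos.le]
      _ = B ^ 2 := by ring
      _ ≤ A * A3 := cs1
  exact le_of_mul_le_mul_right final hA3pos

end DTOLAbs
section DTOLMain

open Finset

lemma min_eq_avg_sub (x y : ℝ) : min x y = (x + y) / 2 - |x - y| / 2 := by
  rcases le_total x y with h | h
  · rw [min_eq_left h, abs_of_nonpos (by linarith)]; ring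
  · rw [min_eq_right h, abs_of_nonneg (by linarith)]; ring

noncomputable def lossF {K T mm : ℕ} (bits : Fin K → Fin mm → Bool) (blk : Fin T → Fin mm)
    (ω : Fin T → Bool × Bool) (j : Fin K) (t : Fin T) : ℝ :=
  if bits j (blk t) then vB (ω t).1 else vB (ω t).2

noncomputable def cTop {T mm : ℕ} (blk : Fin T → Fin mm) (i : Fin mm)
    (ω : Fin T → Bool × Bool) : ℝ :=
  ∑ t ∈ Finset.univ.filter (fun t => blk t = i), vB (ω t).1

noncomputable def cBot {T mm : ℕ} (blk : Fin T → Fin mm) (i : Fin mm)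
    (ω : Fin T → Bool × Bool) : ℝ :=
  ∑ t ∈ Finset.univ.filter (fun t => blk t = i), vB (ω t).2

noncomputable def bstar {T mm : ℕ} (blk : Fin T → Fin mm) (ω : Fin T → Bool × Bool)
    (i : Fin mm) : Bool := decide (cTop blk i ω ≤ cBot blk i ω)

lemma dtol_exists_omega {K T mm : ℕ}
    (ψ : (Fin mm → Bool) ↪ Fin K) (blk : Fin T → Fin mm)
    (p : Fin T → (Fin K → Fin T → ℝ) → (Fin K → ℝ))
    (hp1 : ∀ t ℓ, ∑ j, p t ℓ j = 1)
    (hpa : ∀ (t : Fin T) ℓ ℓ',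
      (∀ (j : Fin K) (s : Fin T), s < t → ℓ j s = ℓ' j s) → p t ℓ = p t ℓ') :
    ∃ ω : Fin T → Bool × Bool,
      (∑ t, ∑ j, p t (lossF (Function.invFun ψ) blk ω) j * lossF (Function.invFun ψ) blk ω j t)
        - (∑ t, lossF (Function.invFun ψ) blk ω (ψ (bstar blk ω)) t)
      ≥ ∑ i : Fin mm,
          Real.sqrt (((Finset.univ.filter (fun t => blk t = i)).card : ℝ) / 6) / 2 := by
  classical
  set bits : Fin K → Fin mm → Bool := Function.invFun ψ with hbitsdef
  have hbits : ∀ b, bits (ψ b) = b := Function.leftInverse_invFun ψ.injective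
  set N : ℝ := (Fintype.card (Fin T → Bool × Bool) : ℝ) with hNdef
  have hN0 : (0:ℝ) < N := by
    have h : 0 < Fintype.card (Fin T → Bool × Bool) := Fintype.card_pos
    rw [hNdef]; exact_mod_cast h
  set bs : Fin mm → Finset (Fin T) := fun i => Finset.univ.filter (fun t => blk t = i)
    with hbsdef
  -- Part 1 : total algorithm loss over all ω
  have SA : ∑ ω : Fin T → Bool × Bool,
      ∑ t, ∑ j, p t (lossF bits blk ω) j * lossF bits blk ω j t = (T : ℝ) / 2 * N := by
    rw [Finset.sum_comm]
    have per_t : ∀ t : Fin T,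
        ∑ ω : Fin T → Bool × Bool, ∑ j, p t (lossF bits blk ω) j * lossF bits blk ω j t
          = N / 2 := by
      intro t
      rw [Finset.sum_comm]
      have per_j : ∀ j : Fin K,
          ∑ ω : Fin T → Bool × Bool, p t (lossF bits blk ω) j * lossF bits blk ω j t
            = (∑ ω : Fin T → Bool × Bool, p t (lossF bits blk ω) j) / 2 := by
        intro j
        have hFinv : ∀ (ω : Fin T → Bool × Bool) c,
            (fun ω => p t (lossF bits blk ω) j) (Function.update ω t c)
              = (fun ω => p t (lossF bits blk ω) j) ω := by
          intro ω c
          have heq : p t (lossF bits blk (Function.update ω t c)) = p t (lossF bits blk ω) := by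
            apply hpa
            intro j' s hst
            simp only [lossF, Function.update_of_ne (ne_of_lt hst)]
          simpa using congrFun heq j
        have hcf := coord_factor t (fun c => if bits j (blk t) then vB c.1 else vB c.2)
            (fun ω => p t (lossF bits blk ω) j) hFinv
        have hsum2 : (∑ c : Bool × Bool, if bits j (blk t) then vB c.1 else vB c.2) = 2 := by
          by_cases hb : bits j (blk t) <;>
            · rw [Fintype.sum_prod_type]
              norm_num [Fintype.sum_bool, vB, hb]
        have hcard4 : ((Fintype.card (Bool × Bool) : ℝ)) = 4 := by simp
        rw [hsum2, hcard4] at hcf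
        have hswap : ∑ ω : Fin T → Bool × Bool, p t (lossF bits blk ω) j * lossF bits blk ω j t
            = ∑ ω : Fin T → Bool × Bool,
                (if bits j (blk t) then vB (ω t).1 else vB (ω t).2)
                  * p t (lossF bits blk ω) j := by
          exact Finset.sum_congr rfl fun ω _ => by rw [mul_comm]; rfl
        rw [hswap]
        linarith [hcf]
      rw [Finset.sum_congr rfl fun j _ => per_j j]
      rw [← Finset.sum_div, Finset.sum_comm]
      rw [Finset.sum_congr rfl fun ω _ => hp1 t (lossF bits blk ω)]
      rw [Finset.sum_const, Finset.card_univ, nsmul_eq_mul, mul_one, hNdef]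
    rw [Finset.sum_congr rfl fun t _ => per_t t, Finset.sum_const, Finset.card_univ,
      nsmul_eq_mul, Fintype.card_fin]
    ring
  -- Part 2 : best expert loss pointwise
  have SL : ∀ ω : Fin T → Bool × Bool,
      (∑ t, lossF bits blk ω (ψ (bstar blk ω)) t)
        = ∑ i : Fin mm, min (cTop blk i ω) (cBot blk i ω) := by
    intro ω
    rw [← Finset.sum_fiberwise Finset.univ blk (fun t => lossF bits blk ω (ψ (bstar blk ω)) t)]
    refine Finset.sum_congr rfl fun i _ => ?_
    have hinner : ∀ t ∈ Finset.univ.filter (fun t => blk t = i),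
        lossF bits blk ω (ψ (bstar blk ω)) t
          = if bstar blk ω i then vB (ω t).1 else vB (ω t).2 := by
      intro t ht
      have hbt : blk t = i := (Finset.mem_filter.mp ht).2
      simp only [lossF, hbits, hbt]
    rw [Finset.sum_congr rfl hinner]
    by_cases hb : cTop blk i ω ≤ cBot blk i ω
    · have : bstar blk ω i = true := by simp [bstar, hb]
      simp only [this, if_true, min_eq_left hb]
      rfl
    · have : bstar blk ω i = false := by simp [bstar, hb]
      push_neg at hb
      simp only [this, if_false, min_eq_right hb.le]
      rfl
  -- Part 3 : averaged best expert loss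
  have SLsum : ∑ ω : Fin T → Bool × Bool, ∑ i : Fin mm, min (cTop blk i ω) (cBot blk i ω)
      ≤ (T : ℝ) / 2 * N - (∑ i : Fin mm, Real.sqrt (((bs i).card : ℝ) / 6) / 2) * N := by
    rw [Finset.sum_comm]
    have per_i : ∀ i : Fin mm,
        ∑ ω : Fin T → Bool × Bool, min (cTop blk i ω) (cBot blk i ω)
          ≤ ((bs i).card : ℝ) / 2 * N - Real.sqrt (((bs i).card : ℝ) / 6) / 2 * N := by
      intro i
      have hmin : ∀ ω : Fin T → Bool × Bool, min (cTop blk i ω) (cBot blk i ω)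
          = (cTop blk i ω + cBot blk i ω) / 2 - |Dw (bs i) ω| / 2 := by
        intro ω
        rw [min_eq_avg_sub]
        have : cTop blk i ω - cBot blk i ω = Dw (bs i) ω := by
          rw [cTop, cBot, Dw, ← Finset.sum_sub_distrib]
          all_goals rfl
        rw [this]
      rw [Finset.sum_congr rfl fun ω _ => hmin ω, Finset.sum_sub_distrib]
      have htop : ∑ ω : Fin T → Bool × Bool, (cTop blk i ω + cBot blk i ω) / 2
          = ((bs i).card : ℝ) / 2 * N := by
        rw [← Finset.sum_div]
        have hsplit : ∑ ω : Fin T → Bool × Bool, (cTop blk i ω + cBot blk i ω)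
            = ∑ t ∈ bs i, ∑ ω : Fin T → Bool × Bool, (vB (ω t).1 + vB (ω t).2) := by
          rw [Finset.sum_comm]
          refine Finset.sum_congr rfl fun ω _ => ?_
          rw [cTop, cBot, ← Finset.sum_add_distrib]
          all_goals rfl
        have per_t : ∀ t : Fin T,
            ∑ ω : Fin T → Bool × Bool, (vB (ω t).1 + vB (ω t).2) = N := by
          intro t
          have hcf := coord_factor t (fun c => vB c.1 + vB c.2)
              (fun _ : Fin T → Bool × Bool => (1:ℝ)) (fun _ _ => rfl)
          have h1 : (∑ c : Bool × Bool, (vB c.1 + vB c.2)) = 4 := by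
            rw [Fintype.sum_prod_type]
            norm_num [Fintype.sum_bool, vB]
          have hcard4 : ((Fintype.card (Bool × Bool) : ℝ)) = 4 := by simp
          rw [h1, hcard4] at hcf
          simp only [mul_one] at hcf
          rw [Finset.sum_const, Finset.card_univ, nsmul_eq_mul, mul_one] at hcf
          have := mul_left_cancel₀ (by norm_num : (4:ℝ) ≠ 0) hcf
          rw [this, hNdef]
        rw [hsplit, Finset.sum_congr rfl fun t _ => per_t t, Finset.sum_const, nsmul_eq_mul]
        ring
      have habs : Real.sqrt (((bs i).card : ℝ) / 6) * N
          ≤ ∑ ω : Fin T → Bool × Bool, |Dw (bs i) ω| := by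
        rw [hNdef]
        exact abs_moment_lower (bs i)
      rw [htop]
      rw [← Finset.sum_div]
      have := habs
      linarith
    calc ∑ i : Fin mm, ∑ ω : Fin T → Bool × Bool, min (cTop blk i ω) (cBot blk i ω)
        ≤ ∑ i : Fin mm, (((bs i).card : ℝ) / 2 * N - Real.sqrt (((bs i).card : ℝ) / 6) / 2 * N) :=
          Finset.sum_le_sum fun i _ => per_i i
      _ = (∑ i : Fin mm, ((bs i).card : ℝ)) / 2 * N
            - (∑ i : Fin mm, Real.sqrt (((bs i).card : ℝ) / 6) / 2) * N := by
          rw [Finset.sum_sub_distrib, ← Finset.sum_mul, ← Finset.sum_mul, Finset.sum_div]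
          all_goals exact Finset.sum_congr rfl fun i _ => by ring
      _ = (T : ℝ) / 2 * N - (∑ i : Fin mm, Real.sqrt (((bs i).card : ℝ) / 6) / 2) * N := by
          have hcards : ∑ i : Fin mm, ((bs i).card : ℝ) = (T : ℝ) := by
            have h := Finset.card_eq_sum_card_fiberwise
              (f := blk) (s := Finset.univ) (t := Finset.univ)
              (fun t _ => Finset.mem_univ (blk t))
            rw [Finset.card_univ, Fintype.card_fin] at h
            rw [hbsdef]
            exact_mod_cast h.symm
          rw [hcards]
  -- Part 4 : combine and extract a good ω
  have total : (∑ i : Fin mm, Real.sqrt (((bs i).card : ℝ) / 6) / 2) * N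
      ≤ ∑ ω : Fin T → Bool × Bool,
          ((∑ t, ∑ j, p t (lossF bits blk ω) j * lossF bits blk ω j t)
            - (∑ t, lossF bits blk ω (ψ (bstar blk ω)) t)) := by
    rw [Finset.sum_sub_distrib, SA]
    have : ∑ ω : Fin T → Bool × Bool, ∑ t, lossF bits blk ω (ψ (bstar blk ω)) t
        = ∑ ω : Fin T → Bool × Bool, ∑ i : Fin mm, min (cTop blk i ω) (cBot blk i ω) := by
      exact Finset.sum_congr rfl fun ω _ => SL ω
    rw [this]
    linarith [SLsum]
  have hexist : ∃ ω ∈ (Finset.univ : Finset (Fin T → Bool × Bool)),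
      (∑ i : Fin mm, Real.sqrt (((bs i).card : ℝ) / 6) / 2)
        ≤ (∑ t, ∑ j, p t (lossF bits blk ω) j * lossF bits blk ω j t)
            - (∑ t, lossF bits blk ω (ψ (bstar blk ω)) t) := by
    apply Finset.exists_le_of_sum_le Finset.univ_nonempty
    rw [Finset.sum_const, Finset.card_univ, nsmul_eq_mul]
    calc (Fintype.card (Fin T → Bool × Bool) : ℝ)
          * (∑ i : Fin mm, Real.sqrt (((bs i).card : ℝ) / 6) / 2)
        = (∑ i : Fin mm, Real.sqrt (((bs i).card : ℝ) / 6) / 2) * N := by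
          rw [hNdef]; ring
      _ ≤ _ := total
  obtain ⟨ω, _, hω⟩ := hexist
  exact ⟨ω, hω⟩

end DTOLMain

/-- **Fully non-asymptotic minimax lower bound for DTOL.**
For a universal constant `L`, for every adaptive strategy `p` (a probability
vector over `K` experts each round, depending only on past losses) there is a
sequence of losses in `[0,1]` forcing regret at least
`(1/(2L)) · min(√(2T log K), 2T)`. -/
theorem dtol_minimax_lower_bound :
    ∃ L : ℝ, 0 < L ∧ ∀ K T : ℕ, 1 ≤ K → 1 ≤ T →
      ∀ p : Fin T → (Fin K → Fin T → ℝ) → (Fin K → ℝ),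
        (∀ t ℓ j, 0 ≤ p t ℓ j) →
        (∀ t ℓ, ∑ j, p t ℓ j = 1) →
        (∀ (t : Fin T) ℓ ℓ',
          (∀ (j : Fin K) (s : Fin T), s < t → ℓ j s = ℓ' j s) → p t ℓ = p t ℓ') →
        ∃ ℓ : Fin K → Fin T → ℝ,
          (∀ j t, ℓ j t ∈ Set.Icc (0 : ℝ) 1) ∧
          (∑ t, ∑ j, p t ℓ j * ℓ j t) - (⨅ j : Fin K, ∑ t, ℓ j t)
            ≥ (1 / (2 * L)) * min (Real.sqrt (2 * T * Real.log K)) (2 * T) := by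
    classical
  refine ⟨100, by norm_num, ?_⟩
  intro K T hK hT p hp0 hp1 hpa
  rcases eq_or_lt_of_le hK with hK1 | hK2
  · -- trivial case K = 1
    subst hK1
    refine ⟨fun _ _ => 0, fun j t => ⟨le_rfl, zero_le_one⟩, ?_⟩
    have hlog : Real.log ((1:ℕ) : ℝ) = 0 := by norm_num
    have h2T : (0:ℝ) ≤ 2 * T := by positivity
    rw [hlog, mul_zero, Real.sqrt_zero, min_eq_left h2T, mul_zero]
    have hinf : (⨅ _j : Fin 1, ∑ _t : Fin T, (0:ℝ)) = 0 := by simp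
    simp [hinf]
  -- main case 2 ≤ K
  have hK0 : K ≠ 0 := by omega
  have hT0 : 0 < T := hT
  set m := min (Nat.log 2 K) T with hmdef
  have hlogpos : 0 < Nat.log 2 K := Nat.log_pos one_lt_two hK2
  have hm0 : 0 < m := lt_min hlogpos hT0
  have hmT : m ≤ T := min_le_right _ _
  have h2m : 2 ^ m ≤ K :=
    le_trans (Nat.pow_le_pow_right (by norm_num) (min_le_left _ _)) (Nat.pow_log_le_self 2 hK0)
  have hcard : Fintype.card (Fin m → Bool) ≤ Fintype.card (Fin K) := by
    simp only [Fintype.card_fun, Fintype.card_bool, Fintype.card_fin]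
    exact h2m
  obtain ⟨ψ⟩ := Function.Embedding.nonempty_of_card_le hcard
  set blk : Fin T → Fin m := fun t => ⟨(t : ℕ) % m, Nat.mod_lt _ hm0⟩ with hblkdef
  obtain ⟨ω, hω⟩ := dtol_exists_omega ψ blk p hp1 hpa
  refine ⟨lossF (Function.invFun ψ) blk ω, ?_, ?_⟩
  · intro j t
    refine ⟨?_, ?_⟩
    · simp only [lossF, vB]
      split <;> split <;> norm_num
    · simp only [lossF, vB]
      split <;> split <;> norm_num
  -- regret bound
  set B0 : ℕ := T / m with hB0def
  have hB01 : 1 ≤ B0 := (Nat.one_le_div_iff hm0).mpr hmT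
  have hmB0T : B0 * m ≤ T := Nat.div_mul_le_self T m
  -- block sizes are at least B0
  have hblocks : ∀ i : Fin m,
      B0 ≤ ((Finset.univ.filter (fun t => blk t = i)).card) := by
    intro i
    have := Finset.card_le_card_of_injOn
      (f := fun q : ℕ => (⟨((i : ℕ) + q * m) % T, Nat.mod_lt _ hT0⟩ : Fin T))
      (s := Finset.range B0)
      (t := Finset.univ.filter (fun t => blk t = i)) ?_ ?_
    · simpa using this
    · intro q hq
      rw [Finset.mem_coe, Finset.mem_range] at hq
      have hlt : (i : ℕ) + q * m < T := by
        have h1 : (i : ℕ) + q * m < q * m + m := by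
          rw [add_comm]
          exact Nat.add_lt_add_left i.isLt _
        have h2 : q * m + m = (q + 1) * m := by ring
        have h3 : (q + 1) * m ≤ B0 * m := Nat.mul_le_mul_right m (by omega)
        omega
      rw [Finset.mem_coe, Finset.mem_filter]
      refine ⟨Finset.mem_univ _, ?_⟩
      apply Fin.ext
      show (((i : ℕ) + q * m) % T) % m = (i : ℕ)
      rw [Nat.mod_eq_of_lt hlt, Nat.add_mul_mod_self_right, Nat.mod_eq_of_lt i.isLt]
    · intro q1 hq1 q2 hq2 heq
      rw [Finset.mem_coe, Finset.mem_range] at hq1 hq2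
      have hv := congrArg Fin.val heq
      simp only at hv
      have hlt : ∀ q, q < B0 → (i : ℕ) + q * m < T := by
        intro q hq
        have h1 : (i : ℕ) + q * m < q * m + m := by
          rw [add_comm]
          exact Nat.add_lt_add_left i.isLt _
        have h3 : (q + 1) * m ≤ B0 * m := Nat.mul_le_mul_right m (by omega)
        have h2 : q * m + m = (q + 1) * m := by ring
        omega
      rw [Nat.mod_eq_of_lt (hlt q1 hq1), Nat.mod_eq_of_lt (hlt q2 hq2)] at hv
      have : q1 * m = q2 * m := by omega
      exact Nat.eq_of_mul_eq_mul_right hm0 this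
  -- lower bound for the sum of sqrt terms
  have hsum_ge : (m : ℝ) * (Real.sqrt ((B0 : ℝ) / 6) / 2)
      ≤ ∑ i : Fin m,
          Real.sqrt (((Finset.univ.filter (fun t => blk t = i)).card : ℝ) / 6) / 2 := by
    have : (m : ℝ) * (Real.sqrt ((B0 : ℝ) / 6) / 2)
        = ∑ _i : Fin m, Real.sqrt ((B0 : ℝ) / 6) / 2 := by
      rw [Finset.sum_const, Finset.card_univ, Fintype.card_fin, nsmul_eq_mul]
    rw [this]
    refine Finset.sum_le_sum fun i _ => ?_
    have hle : (B0 : ℝ) ≤ ((Finset.univ.filter (fun t => blk t = i)).card : ℝ) := by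
      exact_mod_cast hblocks i
    have := Real.sqrt_le_sqrt (by linarith : (B0 : ℝ) / 6
        ≤ ((Finset.univ.filter (fun t => blk t = i)).card : ℝ) / 6)
    linarith
  -- numerical comparison with the stated bound
  have hT2 : (T : ℝ) ≤ 2 * m * B0 := by
    have hdm := Nat.div_add_mod T m
    have hmod : T % m < m := Nat.mod_lt _ hm0
    have hq : m ≤ m * (T / m) := Nat.le_mul_of_pos_right m hB01
    have : T < 2 * (m * (T / m)) := by omega
    have hcast : (T : ℝ) < 2 * (m * (T / m : ℕ)) := by exact_mod_cast this
    rw [hB0def]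
    push_cast at hcast ⊢
    linarith
  have hB0nn : (0:ℝ) ≤ (B0 : ℝ) := Nat.cast_nonneg _
  have hmnn : (0:ℝ) ≤ (m : ℝ) := Nat.cast_nonneg _
  have harith : (1 / (2 * 100)) * min (Real.sqrt (2 * T * Real.log K)) (2 * T)
      ≤ (m : ℝ) * (Real.sqrt ((B0 : ℝ) / 6) / 2) := by
    rcases le_total (Nat.log 2 K) T with hcase | hcase
    · -- m = log₂ K
      have hmeq : m = Nat.log 2 K := min_eq_left hcase
      have hKpow : K < 2 ^ (m + 1) := by
        rw [hmeq]; exact Nat.lt_pow_succ_log_self one_lt_two K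
      have hlogle : Real.log K ≤ 2 * m := by
        have hcast : (K : ℝ) ≤ 2 ^ (m + 1) := by exact_mod_cast hKpow.le
        have hK1R : (1:ℝ) ≤ (K:ℝ) := by exact_mod_cast hK
        have l1 : Real.log K ≤ Real.log (2 ^ (m + 1)) :=
          Real.log_le_log (by linarith) hcast
        rw [Real.log_pow] at l1
        have l2 : Real.log 2 ≤ 1 := by
          have := Real.log_le_sub_one_of_pos (by norm_num : (0:ℝ) < 2)
          linarith
        have hm1R : (1:ℝ) ≤ (m:ℝ) := by exact_mod_cast hm0
        calc Real.log K ≤ (m + 1) * Real.log 2 := by exact_mod_cast l1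
          _ ≤ (m + 1) * 1 := by
              apply mul_le_mul_of_nonneg_left l2 (by linarith)
          _ ≤ 2 * m := by linarith
      have hlognn : 0 ≤ Real.log K := Real.log_natCast_nonneg K
      have step1 : 2 * (T:ℝ) * Real.log K ≤ 8 * (m:ℝ) ^ 2 * B0 := by
        have hTnn : (0:ℝ) ≤ (T:ℝ) := Nat.cast_nonneg _
        nlinarith [mul_le_mul hT2 hlogle hlognn (by linarith : (0:ℝ) ≤ 2 * m * B0)]
      have step2 : Real.sqrt (8 * (m:ℝ) ^ 2 * B0) ≤ 100 * m * Real.sqrt ((B0:ℝ) / 6) := by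
        have hrw : 100 * (m:ℝ) * Real.sqrt ((B0:ℝ) / 6)
            = Real.sqrt ((100 * m) ^ 2 * ((B0:ℝ) / 6)) := by
          rw [Real.sqrt_mul (sq_nonneg _), Real.sqrt_sq (by positivity)]
        rw [hrw]
        apply Real.sqrt_le_sqrt
        nlinarith [mul_nonneg (mul_nonneg hmnn hmnn) hB0nn]
      calc (1 / (2 * 100)) * min (Real.sqrt (2 * T * Real.log K)) (2 * T)
          ≤ (1 / (2 * 100)) * Real.sqrt (2 * T * Real.log K) := by
            apply mul_le_mul_of_nonneg_left (min_le_left _ _) (by norm_num)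
        _ ≤ (1 / (2 * 100)) * Real.sqrt (8 * (m:ℝ) ^ 2 * B0) := by
            apply mul_le_mul_of_nonneg_left (Real.sqrt_le_sqrt step1) (by norm_num)
        _ ≤ (1 / (2 * 100)) * (100 * m * Real.sqrt ((B0:ℝ) / 6)) := by
            apply mul_le_mul_of_nonneg_left step2 (by norm_num)
        _ = (m : ℝ) * (Real.sqrt ((B0 : ℝ) / 6) / 2) := by ring
    · -- m = T
      have hmeq : m = T := min_eq_right hcase
      have hB0eq : B0 = 1 := by rw [hB0def, hmeq, Nat.div_self hT0]
      have hsq : (1:ℝ) / 25 ≤ Real.sqrt ((1:ℝ) / 6) := by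
        have h := Real.sq_sqrt (show (0:ℝ) ≤ 1 / 6 by norm_num)
        nlinarith [Real.sqrt_nonneg ((1:ℝ) / 6)]
      have hTR : (1:ℝ) ≤ (T:ℝ) := by exact_mod_cast hT
      calc (1 / (2 * 100)) * min (Real.sqrt (2 * T * Real.log K)) (2 * T)
          ≤ (1 / (2 * 100)) * (2 * T) := by
            apply mul_le_mul_of_nonneg_left (min_le_right _ _) (by norm_num)
        _ ≤ (T : ℝ) * (Real.sqrt ((1:ℝ) / 6) / 2) := by nlinarith
        _ = (m : ℝ) * (Real.sqrt ((B0 : ℝ) / 6) / 2) := by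
            rw [hmeq, hB0eq]; norm_num
  -- assemble
  have hinf_le : (⨅ j : Fin K, ∑ t, lossF (Function.invFun ψ) blk ω j t)
      ≤ ∑ t, lossF (Function.invFun ψ) blk ω (ψ (bstar blk ω)) t :=
    ciInf_le (Set.Finite.bddBelow (Set.finite_range _)) (ψ (bstar blk ω))
  have := hω
  rw [ge_iff_le]
  calc (1 / (2 * 100)) * min (Real.sqrt (2 * T * Real.log K)) (2 * T)
      ≤ (m : ℝ) * (Real.sqrt ((B0 : ℝ) / 6) / 2) := harith
    _ ≤ ∑ i : Fin m,
          Real.sqrt (((Finset.univ.filter (fun t => blk t = i)).card : ℝ) / 6) / 2 := hsum_ge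
    _ ≤ (∑ t, ∑ j, p t (lossF (Function.invFun ψ) blk ω) j
            * lossF (Function.invFun ψ) blk ω j t)
          - (∑ t, lossF (Function.invFun ψ) blk ω (ψ (bstar blk ω)) t) := hω
    _ ≤ (∑ t, ∑ j, p t (lossF (Function.invFun ψ) blk ω) j
            * lossF (Function.invFun ψ) blk ω j t)
          - (⨅ j : Fin K, ∑ t, lossF (Function.invFun ψ) blk ω j t) := by
        exact sub_le_sub_left hinf_le _
end

section
/- Resetting-Hedge, which runs Hedge on alive experts and restarts after each night, achieves ranking regret at most √((m+1)·T·log K) against the best ordering, for K initial experts, T rounds, m nights, and losses in [0,1]. -/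
/-!
On each day the ordering `π` plays a single alive expert, whose loss is at least the best
alive expert's loss, so the ranking regret of `π` is at most the sum of the per-day Hedge
regrets `√(|τ_s| log K)`. Since the days partition the `T` rounds, Cauchy–Schwarz bounds
this sum by `√((m+1) · T · log K)`.
-/

open Finset Function

lemma Real.sum_sqrt_le_sqrt_card_mul_sum {ι : Type*} (s : Finset ι) {f : ι → ℝ}
    (hf : ∀ i, 0 ≤ f i) : ∑ i ∈ s, √(f i) ≤ √(#s * ∑ i ∈ s, f i) := by
  simpa [Real.sqrt_mul (Nat.cast_nonneg _)] using
    Real.sum_sqrt_mul_sqrt_le s (f := fun _ => 1) (fun _ => zero_le_one) hf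

section Partition

variable {ι α : Type*} [Fintype ι] [Fintype α] [DecidableEq α] {τ : ι → Finset α}

lemma Finset.biUnion_univ_eq_univ_of_cover (hcover : ∀ a, ∃ i, a ∈ τ i) :
    univ.biUnion τ = univ :=
  eq_univ_of_forall fun a => (hcover a).elim fun i hi => mem_biUnion.2 ⟨i, mem_univ i, hi⟩

lemma Finset.sum_univ_eq_sum_sum_of_cover {M : Type*} [AddCommMonoid M]
    (hdisj : Pairwise (Disjoint on τ)) (hcover : ∀ a, ∃ i, a ∈ τ i) (f : α → M) :
    ∑ a, f a = ∑ i, ∑ a ∈ τ i, f a := by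
  rw [← biUnion_univ_eq_univ_of_cover hcover, sum_biUnion fun i _ j _ hij => hdisj hij]

lemma Finset.sum_card_le_card_of_pairwise_disjoint (hdisj : Pairwise (Disjoint on τ)) :
    ∑ i, #(τ i) ≤ Fintype.card α := by
  rw [← card_biUnion fun i _ j _ hij => hdisj hij]
  exact card_le_univ _

end Partition

lemma Finset.sum_sub_sum_le_sum_sub_inf' {ι E : Type*} (D : Finset ι) {S : ι → Finset E}
    (hS : ∀ i, (S i).Nonempty) (A : ι → ℝ) (L : ι → E → ℝ) {σ : ι → E}
    (hσ : ∀ i, σ i ∈ S i) :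
    ∑ i ∈ D, A i - ∑ i ∈ D, L i (σ i) ≤ ∑ i ∈ D, (A i - (S i).inf' (hS i) (L i)) := by
  rw [← sum_sub_distrib]
  gcongr with i
  exact inf'_le _ (hσ i)

lemma sub_ciInf_le_of_forall_sub_le {ι : Type*} [Nonempty ι] {a b : ℝ} {c : ι → ℝ}
    (h : ∀ i, a - c i ≤ b) : a - ⨅ i, c i ≤ b := by
  have : a - b ≤ ⨅ i, c i := le_ciInf fun i => by linarith [h i]
  linarith

theorem resetting_hedge_regret_general (K T m : ℕ)
    (τ : Fin (m + 1) → Finset (Fin T))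
    (hdisj : ∀ s s', s ≠ s' → Disjoint (τ s) (τ s'))
    (hcover : ∀ t, ∃ s, t ∈ τ s)
    (alive : Fin (m + 1) → Finset (Fin K))
    (hne : ∀ s, (alive s).Nonempty)
    (lhat : Fin T → ℝ) (l : Fin K → Fin T → ℝ)
    (σ : Equiv.Perm (Fin K) → Fin (m + 1) → Fin K)
    (hσ : ∀ π s, σ π s ∈ alive s)
    (hhedge : ∀ s,
      (∑ t ∈ τ s, lhat t)
          - (alive s).inf' (hne s) (fun i => ∑ t ∈ τ s, l i t)
        ≤ Real.sqrt ((τ s).card * Real.log K)) :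
    (∑ t, lhat t)
        - (⨅ π : Equiv.Perm (Fin K), ∑ s, ∑ t ∈ τ s, l (σ π s) t)
      ≤ Real.sqrt ((m + 1) * T * Real.log K) := by
  have hcard : ∑ s, ((τ s).card : ℝ) ≤ T := by
    exact_mod_cast (sum_card_le_card_of_pairwise_disjoint hdisj).trans_eq (Fintype.card_fin T)
  refine sub_ciInf_le_of_forall_sub_le fun π => ?_
  calc ∑ t, lhat t - ∑ s, ∑ t ∈ τ s, l (σ π s) t
      = ∑ s, ∑ t ∈ τ s, lhat t - ∑ s, ∑ t ∈ τ s, l (σ π s) t := by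
        rw [sum_univ_eq_sum_sum_of_cover hdisj hcover]
    _ ≤ ∑ s, (∑ t ∈ τ s, lhat t - (alive s).inf' (hne s) fun i => ∑ t ∈ τ s, l i t) :=
        sum_sub_sum_le_sum_sub_inf' _ hne _ (fun s i => ∑ t ∈ τ s, l i t) (hσ π)
    _ ≤ ∑ s, √((τ s).card * Real.log K) := sum_le_sum fun s _ => hhedge s
    _ ≤ √((m + 1) * ∑ s, (τ s).card * Real.log K) := by
        simpa using Real.sum_sqrt_le_sqrt_card_mul_sum univ
          (f := fun s => (τ s).card * Real.log K) fun s => by positivity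
    _ ≤ √((m + 1) * T * Real.log K) := by
        rw [← sum_mul, mul_assoc]
        gcongr

/-- **Resetting-Hedge achieves ranking regret `√((m+1)·T·log K)`.**
Rounds are partitioned into `m+1` days; `alive s` is the set of alive experts
on day `s`, `σ π s ∈ alive s` is the expert ordering `π` plays on day `s`, and
the restarted Hedge run on day `s` has classical regret at most
`√(|τ_s| log K)`.  Then the ranking regret against the best ordering is at most
`√((m+1)·T·log K)`. -/
theorem resetting_hedge_regret (K T m : ℕ) (hK : 1 ≤ K)
    (τ : Fin (m + 1) → Finset (Fin T))
    (hdisj : ∀ s s', s ≠ s' → Disjoint (τ s) (τ s'))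
    (hcover : ∀ t, ∃ s, t ∈ τ s)
    (alive : Fin (m + 1) → Finset (Fin K))
    (hne : ∀ s, (alive s).Nonempty)
    (lhat : Fin T → ℝ) (l : Fin K → Fin T → ℝ)
    (hloss : ∀ i t, l i t ∈ Set.Icc (0 : ℝ) 1)
    (σ : Equiv.Perm (Fin K) → Fin (m + 1) → Fin K)
    (hσ : ∀ π s, σ π s ∈ alive s)
    (hhedge : ∀ s,
      (∑ t ∈ τ s, lhat t)
          - (alive s).inf' (hne s) (fun i => ∑ t ∈ τ s, l i t)
        ≤ Real.sqrt ((τ s).card * Real.log K)) :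
    (∑ t, lhat t)
        - (⨅ π : Equiv.Perm (Fin K), ∑ s, ∑ t ∈ τ s, l (σ π s) t)
      ≤ Real.sqrt ((m + 1) * T * Real.log K) :=
  resetting_hedge_regret_general K T m τ hdisj hcover alive hne lhat l σ hσ hhedge
end

section
/- Running Hedge with learning rate η = √(2 log(2^m (K−m)) / T) on the 2^m(K−m) effective orderings yields ranking regret O(√(T(m + log K))) when the order of dying is known and one expert dies per night. -/
open Real

lemma log_two_pow_mul_le (m : ℕ) {x y : ℝ} (hx : 0 < x) (hxy : x ≤ y) :
    log (2 ^ m * x) ≤ m + log y := by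
  rw [log_mul (by positivity) hx.ne', log_pow]
  have hlog_two : m * log 2 ≤ m :=
    mul_le_of_le_one_right m.cast_nonneg (log_two_lt_d9.le.trans (by norm_num))
  linarith [log_le_log hx hxy]

/-- **Known order of dying: regret `O(√(T(m + log K)))`.**
Suppose Hedge run on the `2^m (K - m)` effective orderings (with the optimally
tuned learning rate) guarantees regret at most `c · √(T · log(2^m (K-m)) / 2)`.
Then there is a constant `C` (depending only on `c`) such that the ranking
regret is at most `C · √(T (m + log K))`. -/
theorem known_order_upper_bound (c : ℝ) (hc : 0 < c) :
    ∃ C : ℝ, 0 < C ∧ ∀ (K m T : ℕ) (R : ℝ), m < K →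
      R ≤ c * Real.sqrt ((T : ℝ) * Real.log ((2 : ℝ) ^ m * ((K : ℝ) - m)) / 2) →
      R ≤ C * Real.sqrt ((T : ℝ) * ((m : ℝ) + Real.log K)) := by
  refine ⟨c, hc, fun K m T R hmK hR => hR.trans ?_⟩
  have hKm : (1 : ℝ) ≤ K - m := by
    have : (m : ℝ) + 1 ≤ K := by exact_mod_cast hmK
    linarith
  have hlog_nonneg : 0 ≤ log (2 ^ m * ((K : ℝ) - m)) :=
    log_nonneg (one_le_mul_of_one_le_of_one_le (one_le_pow₀ one_le_two) hKm)
  have hlog_le : log (2 ^ m * ((K : ℝ) - m)) ≤ m + log K :=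
    log_two_pow_mul_le m (by linarith) (by linarith [m.cast_nonneg (α := ℝ)])
  gcongr
  calc (T : ℝ) * log (2 ^ m * ((K : ℝ) - m)) / 2
      ≤ T * log (2 ^ m * ((K : ℝ) - m)) := half_le_self (by positivity)
    _ ≤ T * (m + log K) := by gcongr
end

section
/- In the dying experts setting with all K! orderings, suppose expert e_j dies at the end of round t−1. For any two alive experts i, k ≠ j, there is a bijection between Π_i^t ∩ Π_j^{t−1} and Π_k^t ∩ Π_j^{t−1} preserving cumulative loss through round t−1; consequently ∑_{π ∈ Π_i^t ∩ Π_j^{t−1}} e^{−η L_π^{t−1}} = (1/|E_a^t|) ∑_{π ∈ Π_j^{t−1}} e^{−η L_π^{t−1}}. -/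
/-!
Multiplying an ordering `π` on the left by the transposition of two experts `a, b` that are
alive at round `s` replaces its first alive expert `c` at round `s` by `swap a b c`. If `π`
has first alive expert `j` at round `t`, then at every round `s ≤ t` its first alive
expert is `j` or precedes it, and `j` precedes every other expert alive at round `t`; so for
`a, b` alive at round `t + 1` the swap fixes the first alive experts, hence the loss,
through round `t`, while at round `t + 1` it moves `π` from `Π_a^{t+1}` to `Π_b^{t+1}`.
The surviving experts therefore split `Π_j^t` into `|E_a^{t+1}|` classes of equal weight.
-/

open Equiv Finset

theorem Equiv.swap_apply_mem {α : Type*} [DecidableEq α] {S : Set α} {a b e : α}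
    (ha : a ∈ S) (hb : b ∈ S) (he : e ∈ S) : swap a b e ∈ S := by
  rw [swap_apply_def]
  split_ifs <;> assumption

namespace Equiv.Perm

variable {α : Type*} [LinearOrder α]

-- The ordering `π` lists `π 0, π 1, …`; `c` is the element of `S` it lists first.
def IsFirstIn (π : Perm α) (S : Set α) (c : α) : Prop :=
  c ∈ S ∧ ∀ e ∈ S, π.symm c ≤ π.symm e

variable {π : Perm α} {S T : Set α} {a b c d : α}

theorem IsFirstIn.eq_of_mem (hc : π.IsFirstIn S c) (hd : π.IsFirstIn T d) (hdS : d ∈ S)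
    (hcT : c ∈ T) : c = d :=
  π.symm.injective (le_antisymm (hc.2 d hdS) (hd.2 c hcT))

theorem IsFirstIn.swap_mul (hc : π.IsFirstIn S c) (ha : a ∈ S) (hb : b ∈ S) :
    (swap a b * π).IsFirstIn S (swap a b c) := by
  refine ⟨swap_apply_mem ha hb hc.1, fun e he => ?_⟩
  have := hc.2 (swap a b e) (swap_apply_mem ha hb he)
  simpa [← inv_def, mul_inv_rev] using this

end Equiv.Perm

section DyingExperts

variable {α : Type*} [LinearOrder α] {alive : ℕ → Finset α} {fa : Perm α → ℕ → α}
  {π : Perm α} {s t : ℕ} {a b i j : α}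

theorem firstAlive_swap_mul (hfa : ∀ (π : Perm α) s, π.IsFirstIn (alive s) (fa π s))
    (ha : a ∈ alive s) (hb : b ∈ alive s) :
    fa (swap a b * π) s = swap a b (fa π s) :=
  (hfa _ s).eq_of_mem ((hfa π s).swap_mul ha hb) ((hfa π s).swap_mul ha hb).1 (hfa _ s).1

theorem firstAlive_swap_mul_of_le (hfa : ∀ (π : Perm α) s, π.IsFirstIn (alive s) (fa π s))
    (hanti : Antitone alive) (hj : fa π t = j) (ha : a ∈ alive t) (haj : a ≠ j)
    (hb : b ∈ alive t) (hbj : b ≠ j) (hst : s ≤ t) :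
    fa (swap a b * π) s = fa π s := by
  have hne {x : α} (hx : x ∈ alive t) (hxj : x ≠ j) : fa π s ≠ x := by
    rintro rfl
    subst hj
    exact hxj ((hfa π s).eq_of_mem (hfa π t) (hanti hst (hfa π t).1) hx)
  rw [firstAlive_swap_mul hfa (hanti hst ha) (hanti hst hb),
    swap_apply_of_ne_of_ne (hne ha haj) (hne hb hbj)]

theorem sum_firstAlive_swap_mul {M : Type*} [AddCommMonoid M] (g : α → ℕ → M)
    (hfa : ∀ (π : Perm α) s, π.IsFirstIn (alive s) (fa π s)) (hanti : Antitone alive)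
    (hdie : alive (t + 1) = (alive t).erase j) (ha : a ∈ alive (t + 1)) (hb : b ∈ alive (t + 1))
    (hj : fa π t = j) :
    ∑ s ∈ range (t + 1), g (fa (swap a b * π) s) s =
      ∑ s ∈ range (t + 1), g (fa π s) s := by
  rw [hdie, mem_erase] at ha hb
  refine sum_congr rfl fun s hs => ?_
  rw [firstAlive_swap_mul_of_le hfa hanti hj ha.2 ha.1 hb.2 hb.1
    (Nat.lt_succ_iff.mp (mem_range.mp hs))]

theorem firstAlive_swap_mul_of_dies (hfa : ∀ (π : Perm α) s, π.IsFirstIn (alive s) (fa π s))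
    (hanti : Antitone alive) (hdie : alive (t + 1) = (alive t).erase j)
    (ha : a ∈ alive (t + 1)) (hb : b ∈ alive (t + 1))
    (hπ : fa π (t + 1) = a ∧ fa π t = j) :
    fa (swap a b * π) (t + 1) = b ∧ fa (swap a b * π) t = j := by
  refine ⟨by rw [firstAlive_swap_mul hfa ha hb, hπ.1, swap_apply_left], ?_⟩
  rw [hdie, mem_erase] at ha hb
  rw [firstAlive_swap_mul_of_le hfa hanti hπ.2 ha.2 ha.1 hb.2 hb.1 le_rfl, hπ.2]

theorem bijOn_swap_mul (hfa : ∀ (π : Perm α) s, π.IsFirstIn (alive s) (fa π s))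
    (hanti : Antitone alive) (hdie : alive (t + 1) = (alive t).erase j)
    (ha : a ∈ alive (t + 1)) (hb : b ∈ alive (t + 1)) :
    Set.BijOn (swap a b * ·) {π | fa π (t + 1) = a ∧ fa π t = j}
      {π | fa π (t + 1) = b ∧ fa π t = j} := by
  have hinv : Set.InvOn (swap a b * ·) (swap a b * ·) {π | fa π (t + 1) = a ∧ fa π t = j}
      {π | fa π (t + 1) = b ∧ fa π t = j} :=
    ⟨fun π _ => swap_mul_self_mul a b π, fun π _ => swap_mul_self_mul a b π⟩
  refine hinv.bijOn (fun π => firstAlive_swap_mul_of_dies hfa hanti hdie ha hb) fun π hπ => ?_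
  rw [swap_comm]
  exact firstAlive_swap_mul_of_dies hfa hanti hdie hb ha hπ

theorem sum_firstAlive_eq_card_nsmul [Fintype α] {M : Type*} [AddCommMonoid M] (w : Perm α → M)
    (hfa : ∀ (π : Perm α) s, π.IsFirstIn (alive s) (fa π s))
    (hanti : Antitone alive) (hdie : alive (t + 1) = (alive t).erase j) (hi : i ∈ alive (t + 1))
    (hw : ∀ a ∈ alive (t + 1), ∀ π, fa π t = j → w (swap a i * π) = w π) :
    ∑ π with fa π t = j, w π =
      #(alive (t + 1)) • ∑ π with fa π (t + 1) = i ∧ fa π t = j, w π := by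
  have hfiber : ∀ a ∈ alive (t + 1), ∑ π with fa π t = j ∧ fa π (t + 1) = a, w π =
      ∑ π with fa π (t + 1) = i ∧ fa π t = j, w π := by
    intro a ha
    refine sum_nbij' (swap a i * ·) (swap a i * ·) (fun π hπ => ?_) (fun π hπ => ?_)
      (fun π _ => swap_mul_self_mul a i π) (fun π _ => swap_mul_self_mul a i π)
      (fun π hπ => (hw a ha π (mem_filter.mp hπ).2.1).symm)
    · simp only [mem_filter, mem_univ, true_and] at hπ ⊢
      exact firstAlive_swap_mul_of_dies hfa hanti hdie ha hi hπ.symm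
    · simp only [mem_filter, mem_univ, true_and] at hπ ⊢
      rw [swap_comm]
      exact (firstAlive_swap_mul_of_dies hfa hanti hdie hi ha hπ).symm
  rw [← sum_fiberwise_of_maps_to (t := alive (t + 1)) (fun π _ => (hfa π (t + 1)).1)]
  simp only [filter_filter]
  rw [sum_congr rfl hfiber, sum_const]

end DyingExperts

theorem dying_symmetry_general (K : ℕ)
    (alive : ℕ → Finset (Fin K))
    (hnested : ∀ s, alive (s + 1) ⊆ alive s)
    (fa : Equiv.Perm (Fin K) → ℕ → Fin K)
    (hfa : ∀ π s, fa π s ∈ alive s ∧ ∀ e ∈ alive s, π.symm (fa π s) ≤ π.symm e)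
    (l : Fin K → ℕ → ℝ) (η : ℝ) (t : ℕ) (j i k : Fin K)
    (hdie : alive (t + 1) = (alive t).erase j)
    (hi : i ∈ alive (t + 1)) (hk : k ∈ alive (t + 1))
    (L : Equiv.Perm (Fin K) → ℝ)
    (hL : ∀ π, L π = ∑ s ∈ Finset.range (t + 1), l (fa π s) s) :
    (∃ f : Equiv.Perm (Fin K) → Equiv.Perm (Fin K),
        Set.BijOn f {π | fa π (t + 1) = i ∧ fa π t = j}
          {π | fa π (t + 1) = k ∧ fa π t = j} ∧
        ∀ π, fa π (t + 1) = i → fa π t = j → L (f π) = L π) ∧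
    (∑ π ∈ Finset.univ.filter
        (fun π : Equiv.Perm (Fin K) => fa π (t + 1) = i ∧ fa π t = j),
        Real.exp (-η * L π))
      = (1 / (alive (t + 1)).card) *
        ∑ π ∈ Finset.univ.filter (fun π : Equiv.Perm (Fin K) => fa π t = j),
          Real.exp (-η * L π) := by
  have hanti : Antitone alive := antitone_nat_of_succ_le hnested
  have hLswap : ∀ a ∈ alive (t + 1), ∀ b ∈ alive (t + 1), ∀ π, fa π t = j →
      L (swap a b * π) = L π := fun a ha b hb π hπ => by
    rw [hL, hL, sum_firstAlive_swap_mul l hfa hanti hdie ha hb hπ]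
  refine ⟨⟨(swap i k * ·), bijOn_swap_mul hfa hanti hdie hi hk,
    fun π _ hπ => hLswap i hi k hk π hπ⟩, ?_⟩
  have hcard : (#(alive (t + 1)) : ℝ) ≠ 0 := Nat.cast_ne_zero.mpr (card_ne_zero_of_mem hi)
  rw [sum_firstAlive_eq_card_nsmul _ hfa hanti hdie hi
    fun a ha π hπ => by rw [hLswap a ha i hi π hπ], nsmul_eq_mul]
  field_simp

/-- **Symmetry of weight redistribution when an expert dies.**
`alive s` is the set of alive experts at round `s` (rounds `0, 1, …`), nested
and nonempty; `fa π s` is the first alive expert of ordering `π` at round `s`.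
Expert `j` dies at the end of round `t`, so `alive (t+1) = (alive t).erase j`.
For any alive experts `i, k` at round `t+1`, there is a loss-preserving
bijection between `Π_i^{t+1} ∩ Π_j^t` and `Π_k^{t+1} ∩ Π_j^t`; consequently
`∑_{π ∈ Π_i^{t+1} ∩ Π_j^t} e^{-η L_π} = (1/|alive (t+1)|) ∑_{π ∈ Π_j^t} e^{-η L_π}`,
where `L_π` is the cumulative loss through round `t`. -/
theorem dying_symmetry (K : ℕ)
    (alive : ℕ → Finset (Fin K))
    (hne : ∀ s, (alive s).Nonempty)
    (hnested : ∀ s, alive (s + 1) ⊆ alive s)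
    (fa : Equiv.Perm (Fin K) → ℕ → Fin K)
    (hfa : ∀ π s, fa π s ∈ alive s ∧ ∀ e ∈ alive s, π.symm (fa π s) ≤ π.symm e)
    (l : Fin K → ℕ → ℝ) (η : ℝ) (t : ℕ) (j i k : Fin K)
    (hj : j ∈ alive t) (hdie : alive (t + 1) = (alive t).erase j)
    (hi : i ∈ alive (t + 1)) (hk : k ∈ alive (t + 1))
    (L : Equiv.Perm (Fin K) → ℝ)
    (hL : ∀ π, L π = ∑ s ∈ Finset.range (t + 1), l (fa π s) s) :
    (∃ f : Equiv.Perm (Fin K) → Equiv.Perm (Fin K),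
        Set.BijOn f {π | fa π (t + 1) = i ∧ fa π t = j}
          {π | fa π (t + 1) = k ∧ fa π t = j} ∧
        ∀ π, fa π (t + 1) = i → fa π t = j → L (f π) = L π) ∧
    (∑ π ∈ Finset.univ.filter
        (fun π : Equiv.Perm (Fin K) => fa π (t + 1) = i ∧ fa π t = j),
        Real.exp (-η * L π))
      = (1 / (alive (t + 1)).card) *
        ∑ π ∈ Finset.univ.filter (fun π : Equiv.Perm (Fin K) => fa π t = j),
          Real.exp (-η * L π) :=
  dying_symmetry_general K alive hnested fa hfa l η t j i k hdie hi hk L hL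
end

section
/- Algorithm HPU (Hedge-Perm-Unknown) maintains, for every round t and every alive expert e_i, the invariant h_{i,t} · c_{i,t} = ∑_{π ∈ Π_i^t} e^{−η L_π^{t−1}}, and therefore its played distribution over alive experts equals the distribution induced by running Hedge with learning rate η on all K! orderings. -/
/-- **HPU simulates Hedge on all `K!` orderings.**
`alive t` is the set of alive experts at round `t` (`alive 0` is everyone);
`die t` is the expert (if any) dying at the end of round `t`; `fa π t` is the
first alive expert of ordering `π` at round `t`.  `h` and `c` follow the HPU
update rules.  Then for every round `t` and alive expert `i`, the invariant
`h_{i,t} · c_{i,t} = ∑_{π ∈ Π_i^t} e^{-η L_π^{t-1}}` holds, and the played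
distribution equals the one induced by Hedge on all orderings. -/
theorem hpu_simulates_hedge (K : ℕ) (hK : 1 ≤ K)
    (alive : ℕ → Finset (Fin K)) (halive0 : alive 0 = Finset.univ)
    (die : ℕ → Option (Fin K))
    (hdiealive : ∀ t, alive (t + 1)
      = (die t).elim (alive t) (fun j => (alive t).erase j))
    (hdiemem : ∀ t j, die t = some j → j ∈ alive t)
    (hne : ∀ t, (alive t).Nonempty)
    (fa : Equiv.Perm (Fin K) → ℕ → Fin K)
    (hfa : ∀ π t, fa π t ∈ alive t ∧ ∀ e ∈ alive t, π.symm (fa π t) ≤ π.symm e)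
    (l : Fin K → ℕ → ℝ) (η : ℝ)
    (h c : ℕ → Fin K → ℝ)
    (hinit : ∀ i, h 0 i = (K - 1).factorial ∧ c 0 i = 1)
    (hupd_none : ∀ t, die t = none → ∀ i ∈ alive (t + 1),
      h (t + 1) i = h t i ∧ c (t + 1) i = c t i * Real.exp (-η * l i t))
    (hupd_some : ∀ t j, die t = some j → ∀ i ∈ alive (t + 1),
      h (t + 1) i
          = h t i * (c t i * Real.exp (-η * l i t))
            + (h t j * (c t j * Real.exp (-η * l j t))) / (alive (t + 1)).card ∧
      c (t + 1) i = 1) :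
    ∀ t, ∀ i ∈ alive t,
      (h t i * c t i
        = ∑ π ∈ Finset.univ.filter (fun π : Equiv.Perm (Fin K) => fa π t = i),
            Real.exp (-η * ∑ s ∈ Finset.range t, l (fa π s) s)) ∧
      ((h t i * c t i) / (∑ j ∈ alive t, h t j * c t j)
        = (∑ π ∈ Finset.univ.filter (fun π : Equiv.Perm (Fin K) => fa π t = i),
            Real.exp (-η * ∑ s ∈ Finset.range t, l (fa π s) s))
          / (∑ π : Equiv.Perm (Fin K),
              Real.exp (-η * ∑ s ∈ Finset.range t, l (fa π s) s))) := by
  classical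
  -- alive is decreasing
  have hsub : ∀ t, alive (t + 1) ⊆ alive t := by
    intro t
    rw [hdiealive t]
    cases die t with
    | none => exact subset_rfl
    | some j => exact Finset.erase_subset _ _
  have hsub' : ∀ s t, s ≤ t → alive t ⊆ alive s := by
    intro s t hst
    induction t with
    | zero =>
      have : s = 0 := Nat.le_zero.mp hst
      subst this; exact subset_rfl
    | succ n ih =>
      rcases Nat.lt_or_ge s (n + 1) with hlt | hge
      · exact (hsub n).trans (ih (Nat.lt_succ_iff.mp hlt))
      · have : s = n + 1 := le_antisymm hst hge
        subst this; exact subset_rfl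
  -- uniqueness of the minimizer
  have hfa_unique : ∀ (π : Equiv.Perm (Fin K)) t x, x ∈ alive t →
      (∀ e ∈ alive t, π.symm x ≤ π.symm e) → fa π t = x := by
    intro π t x hx hmin
    exact π.symm.injective (le_antisymm ((hfa π t).2 x hx) (hmin _ (hfa π t).1))
  -- stability of fa
  have hstable : ∀ (π : Equiv.Perm (Fin K)) t, fa π t ∈ alive (t + 1) →
      fa π (t + 1) = fa π t := by
    intro π t hmem
    exact hfa_unique π (t + 1) _ hmem (fun e he => (hfa π t).2 e (hsub t he))
  -- persistence of fa
  have hpersist : ∀ (π : Equiv.Perm (Fin K)) s t, s ≤ t → fa π s ∈ alive t →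
      fa π t = fa π s := by
    intro π s t
    induction t with
    | zero =>
      intro hst _
      have : s = 0 := Nat.le_zero.mp hst
      subst this; rfl
    | succ n ih =>
      intro hst hmem
      rcases Nat.lt_or_ge s (n + 1) with hlt | hge
      · have hsn : s ≤ n := Nat.lt_succ_iff.mp hlt
        have h1 : fa π n = fa π s := ih hsn (hsub n hmem)
        have h2 : fa π (n + 1) = fa π n := hstable π n (by rw [h1]; exact hmem)
        rw [h2, h1]
      · have : s = n + 1 := le_antisymm hst hge
        subst this; rfl
  -- symm of a swap-composition
  have hsymm : ∀ (i i' : Fin K) (π : Equiv.Perm (Fin K)) (x : Fin K),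
      (Equiv.swap i i' * π).symm x = π.symm (Equiv.swap i i' x) := by
    intro i i' π x
    simp [Equiv.Perm.mul_def]
  -- swap maps alive to alive
  have hswapmem : ∀ (i i' : Fin K) t (x : Fin K), i ∈ alive t → i' ∈ alive t →
      x ∈ alive t → Equiv.swap i i' x ∈ alive t := by
    intro i i' t x hi hi' hx
    by_cases h1 : x = i
    · rw [h1, Equiv.swap_apply_left]; exact hi'
    · by_cases h2 : x = i'
      · rw [h2, Equiv.swap_apply_right]; exact hi
      · rw [Equiv.swap_apply_of_ne_of_ne h1 h2]; exact hx
  -- fa of a swapped permutation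
  have hfaswap : ∀ (i i' : Fin K) t (π : Equiv.Perm (Fin K)), i ∈ alive t → i' ∈ alive t →
      fa (Equiv.swap i i' * π) t = Equiv.swap i i' (fa π t) := by
    intro i i' t π hi hi'
    apply hfa_unique
    · exact hswapmem i i' t _ hi hi' (hfa π t).1
    · intro e he
      rw [hsymm, hsymm, Equiv.swap_apply_self]
      exact (hfa π t).2 _ (hswapmem i i' t e hi hi' he)
  -- the key invariant
  have key : ∀ t, ∀ i ∈ alive t,
      h t i * c t i
        = ∑ π ∈ Finset.univ.filter (fun π : Equiv.Perm (Fin K) => fa π t = i),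
            Real.exp (-η * ∑ s ∈ Finset.range t, l (fa π s) s) := by
    intro t
    induction t with
    | zero =>
      intro i _
      simp only [Finset.range_zero, Finset.sum_empty, mul_zero, Real.exp_zero,
        Finset.sum_const, nsmul_eq_mul, mul_one]
      rw [(hinit i).1, (hinit i).2, mul_one]
      -- all fibers of `fa · 0` have equal cardinality
      have hcards : ∀ i' : Fin K,
          (Finset.univ.filter (fun π : Equiv.Perm (Fin K) => fa π 0 = i')).card
          = (Finset.univ.filter (fun π : Equiv.Perm (Fin K) => fa π 0 = i)).card := by
        intro i'
        have hm : ∀ x : Fin K, x ∈ alive 0 := by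
          intro x; rw [halive0]; exact Finset.mem_univ x
        apply Finset.card_bij' (fun π _ => Equiv.swap i' i * π) (fun π _ => Equiv.swap i' i * π)
        · intro π hπ
          simp only [Finset.mem_filter, Finset.mem_univ, true_and] at hπ ⊢
          rw [hfaswap i' i 0 π (hm i') (hm i), hπ, Equiv.swap_apply_left]
        · intro π hπ
          simp only [Finset.mem_filter, Finset.mem_univ, true_and] at hπ ⊢
          rw [hfaswap i' i 0 π (hm i') (hm i), hπ, Equiv.swap_apply_right]
        · intro π _; rw [← mul_assoc, Equiv.swap_mul_self, one_mul]
        · intro π _; rw [← mul_assoc, Equiv.swap_mul_self, one_mul]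
      have htot : K.factorial
          = ∑ i' : Fin K, (Finset.univ.filter (fun π : Equiv.Perm (Fin K) => fa π 0 = i')).card := by
        have := Finset.card_eq_sum_card_fiberwise
          (s := (Finset.univ : Finset (Equiv.Perm (Fin K)))) (t := Finset.univ)
          (f := fun π => fa π 0) (fun π _ => Finset.mem_univ _)
        simpa [Finset.card_univ, Fintype.card_perm] using this
      have htot2 : K.factorial
          = K * (Finset.univ.filter (fun π : Equiv.Perm (Fin K) => fa π 0 = i)).card := by
        rw [htot, Finset.sum_congr rfl (fun i' _ => hcards i'), Finset.sum_const,
          Finset.card_univ, Fintype.card_fin, smul_eq_mul]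
      have hKfact : K.factorial = K * (K - 1).factorial := by
        rcases Nat.exists_eq_succ_of_ne_zero (by omega : K ≠ 0) with ⟨k, hk⟩
        subst hk
        simp [Nat.factorial_succ]
      have hcard : (Finset.univ.filter (fun π : Equiv.Perm (Fin K) => fa π 0 = i)).card
          = (K - 1).factorial := by
        have := htot2.symm.trans hKfact
        exact Nat.eq_of_mul_eq_mul_left hK this
      rw [hcard]
    | succ t ih =>
      intro i hi
      cases hd : die t with
      | none =>
        have hAeq : alive (t + 1) = alive t := by rw [hdiealive t, hd]; rfl
        have hit : i ∈ alive t := hAeq ▸ hi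
        obtain ⟨hh, hc⟩ := hupd_none t hd i hi
        have hfix : ∀ π : Equiv.Perm (Fin K), fa π (t + 1) = fa π t := by
          intro π
          exact hstable π t (hAeq ▸ (hfa π t).1)
        have hfilt : Finset.univ.filter (fun π : Equiv.Perm (Fin K) => fa π (t + 1) = i)
            = Finset.univ.filter (fun π : Equiv.Perm (Fin K) => fa π t = i) := by
          ext π
          simp [hfix π]
        rw [hh, hc, ← mul_assoc, ih i hit, hfilt, Finset.sum_mul]
        apply Finset.sum_congr rfl
        intro π hπ
        simp only [Finset.mem_filter, Finset.mem_univ, true_and] at hπ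
        rw [Finset.sum_range_succ, hπ, mul_add, Real.exp_add]
      | some j =>
        have hjal : j ∈ alive t := hdiemem t j hd
        have hAeq : alive (t + 1) = (alive t).erase j := by rw [hdiealive t, hd]; rfl
        have hjA : j ∉ alive (t + 1) := by rw [hAeq]; exact Finset.notMem_erase _ _
        have hij : i ≠ j := fun hh => hjA (hh ▸ hi)
        have hit : i ∈ alive t := hsub t hi
        obtain ⟨hh, hc⟩ := hupd_some t j hd i hi
        -- if fa π t = j then fa π s avoids alive (t+1) members for s ≤ t
        have hkey1 : ∀ (x : Fin K), x ∈ alive (t + 1) → ∀ (π : Equiv.Perm (Fin K)),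
            fa π t = j → ∀ s, s ≤ t → fa π s ≠ x := by
          intro x hx π hπ s hs hcon
          have hxal : fa π s ∈ alive t := by rw [hcon]; exact hsub t hx
          have : fa π t = x := by rw [hpersist π s t hs hxal, hcon]
          exact hjA (by rw [← hπ, this]; exact hx)
        -- swapping two alive-(t+1) experts preserves the j-fiber history
        have hswapfiber : ∀ (x y : Fin K), x ∈ alive (t + 1) → y ∈ alive (t + 1) →
            ∀ (π : Equiv.Perm (Fin K)), fa π t = j →
            (∀ s, s ≤ t → fa (Equiv.swap x y * π) s = fa π s) := by
          intro x y hx hy π hπ s hs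
          rw [hfaswap x y s π (hsub' s (t + 1) (by omega) hx) (hsub' s (t + 1) (by omega) hy)]
          exact Equiv.swap_apply_of_ne_of_ne (hkey1 x hx π hπ s hs) (hkey1 y hy π hπ s hs)
        -- the classes within the j-fiber have equal weight
        have hclass : ∀ x ∈ alive (t + 1),
            (∑ π ∈ Finset.univ.filter
                (fun π : Equiv.Perm (Fin K) => fa π t = j ∧ fa π (t + 1) = x),
              Real.exp (-η * ∑ s ∈ Finset.range t, l (fa π s) s))
            = (∑ π ∈ Finset.univ.filter
                (fun π : Equiv.Perm (Fin K) => fa π t = j ∧ fa π (t + 1) = i),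
              Real.exp (-η * ∑ s ∈ Finset.range t, l (fa π s) s)) := by
          intro x hx
          apply Finset.sum_nbij' (fun π => Equiv.swap x i * π) (fun π => Equiv.swap x i * π)
          · intro π hπ
            simp only [Finset.mem_filter, Finset.mem_univ, true_and] at hπ ⊢
            refine ⟨by rw [hswapfiber x i hx hi π hπ.1 t le_rfl]; exact hπ.1, ?_⟩
            rw [hfaswap x i (t + 1) π hx hi, hπ.2, Equiv.swap_apply_left]
          · intro π hπ
            simp only [Finset.mem_filter, Finset.mem_univ, true_and] at hπ ⊢
            refine ⟨by rw [hswapfiber x i hx hi π hπ.1 t le_rfl]; exact hπ.1, ?_⟩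
            rw [hfaswap x i (t + 1) π hx hi, hπ.2, Equiv.swap_apply_right]
          · intro π _; rw [← mul_assoc, Equiv.swap_mul_self, one_mul]
          · intro π _; rw [← mul_assoc, Equiv.swap_mul_self, one_mul]
          · intro π hπ
            simp only [Finset.mem_filter, Finset.mem_univ, true_and] at hπ
            congr 1
            congr 1
            apply Finset.sum_congr rfl
            intro s hs
            rw [hswapfiber x i hx hi π hπ.1 s (le_of_lt (Finset.mem_range.mp hs))]
        -- the j-fiber total is card · class sum
        have hcardpos : (0 : ℕ) < (alive (t + 1)).card := Finset.card_pos.mpr (hne (t + 1))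
        have hfiber_total :
            (∑ π ∈ Finset.univ.filter (fun π : Equiv.Perm (Fin K) => fa π t = j),
              Real.exp (-η * ∑ s ∈ Finset.range t, l (fa π s) s))
            = ((alive (t + 1)).card : ℝ)
              * (∑ π ∈ Finset.univ.filter
                  (fun π : Equiv.Perm (Fin K) => fa π t = j ∧ fa π (t + 1) = i),
                Real.exp (-η * ∑ s ∈ Finset.range t, l (fa π s) s)) := by
          have step := Finset.sum_fiberwise_of_maps_to
            (s := Finset.univ.filter (fun π : Equiv.Perm (Fin K) => fa π t = j))
            (t := alive (t + 1)) (g := fun π : Equiv.Perm (Fin K) => fa π (t + 1))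
            (fun π _ => (hfa π (t + 1)).1)
            (fun π => Real.exp (-η * ∑ s ∈ Finset.range t, l (fa π s) s))
          rw [← step]
          have hcongr : ∀ x ∈ alive (t + 1),
              (∑ π ∈ (Finset.univ.filter
                  (fun π : Equiv.Perm (Fin K) => fa π t = j)).filter
                  (fun π => fa π (t + 1) = x),
                Real.exp (-η * ∑ s ∈ Finset.range t, l (fa π s) s))
              = (∑ π ∈ Finset.univ.filter
                  (fun π : Equiv.Perm (Fin K) => fa π t = j ∧ fa π (t + 1) = i),
                Real.exp (-η * ∑ s ∈ Finset.range t, l (fa π s) s)) := by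
            intro x hx
            rw [Finset.filter_filter]
            exact hclass x hx
          rw [Finset.sum_congr rfl hcongr, Finset.sum_const, nsmul_eq_mul]
        -- decomposition of the (t+1)-fiber of i
        have hdecomp : Finset.univ.filter (fun π : Equiv.Perm (Fin K) => fa π (t + 1) = i)
            = Finset.univ.filter (fun π : Equiv.Perm (Fin K) => fa π t = i)
              ∪ Finset.univ.filter
                  (fun π : Equiv.Perm (Fin K) => fa π t = j ∧ fa π (t + 1) = i) := by
          ext π
          simp only [Finset.mem_filter, Finset.mem_union, Finset.mem_univ, true_and]
          constructor
          · intro hπ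
            by_cases hcj : fa π t = j
            · right; exact ⟨hcj, hπ⟩
            · left
              have hmem : fa π t ∈ alive (t + 1) := by
                rw [hAeq]; exact Finset.mem_erase.mpr ⟨hcj, (hfa π t).1⟩
              rw [← hπ, hstable π t hmem]
          · rintro (hπ | ⟨_, hπ⟩)
            · rw [hstable π t (by rw [hπ]; exact hi), hπ]
            · exact hπ
        have hdisj : Disjoint
            (Finset.univ.filter (fun π : Equiv.Perm (Fin K) => fa π t = i))
            (Finset.univ.filter
              (fun π : Equiv.Perm (Fin K) => fa π t = j ∧ fa π (t + 1) = i)) := by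
          rw [Finset.disjoint_left]
          intro π hπ1 hπ2
          simp only [Finset.mem_filter, Finset.mem_univ, true_and] at hπ1 hπ2
          exact hij (hπ1 ▸ hπ2.1)
        rw [hdecomp, Finset.sum_union hdisj]
        -- simplify the two sums
        have hsum1 : (∑ π ∈ Finset.univ.filter (fun π : Equiv.Perm (Fin K) => fa π t = i),
              Real.exp (-η * ∑ s ∈ Finset.range (t + 1), l (fa π s) s))
            = (h t i * c t i) * Real.exp (-η * l i t) := by
          rw [ih i hit, Finset.sum_mul]
          apply Finset.sum_congr rfl
          intro π hπ
          simp only [Finset.mem_filter, Finset.mem_univ, true_and] at hπ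
          rw [Finset.sum_range_succ, hπ, mul_add, Real.exp_add]
        have hsum2 : (∑ π ∈ Finset.univ.filter
              (fun π : Equiv.Perm (Fin K) => fa π t = j ∧ fa π (t + 1) = i),
              Real.exp (-η * ∑ s ∈ Finset.range (t + 1), l (fa π s) s))
            = (∑ π ∈ Finset.univ.filter
                (fun π : Equiv.Perm (Fin K) => fa π t = j ∧ fa π (t + 1) = i),
                Real.exp (-η * ∑ s ∈ Finset.range t, l (fa π s) s))
              * Real.exp (-η * l j t) := by
          rw [Finset.sum_mul]
          apply Finset.sum_congr rfl
          intro π hπ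
          simp only [Finset.mem_filter, Finset.mem_univ, true_and] at hπ
          rw [Finset.sum_range_succ, hπ.1, mul_add, Real.exp_add]
        rw [hsum1, hsum2, hh, hc, mul_one]
        have hcne : ((alive (t + 1)).card : ℝ) ≠ 0 := by
          exact_mod_cast hcardpos.ne'
        have hclassval : (∑ π ∈ Finset.univ.filter
              (fun π : Equiv.Perm (Fin K) => fa π t = j ∧ fa π (t + 1) = i),
              Real.exp (-η * ∑ s ∈ Finset.range t, l (fa π s) s))
            = (h t j * c t j) / ((alive (t + 1)).card : ℝ) := by
          rw [eq_div_iff hcne, mul_comm, ← hfiber_total, ← ih j hjal]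
        rw [hclassval]
        field_simp
  -- conclude
  intro t i hi
  refine ⟨key t i hi, ?_⟩
  have hden : (∑ j ∈ alive t, h t j * c t j)
      = ∑ π : Equiv.Perm (Fin K),
          Real.exp (-η * ∑ s ∈ Finset.range t, l (fa π s) s) := by
    rw [← Finset.sum_fiberwise_of_maps_to
      (t := alive t) (g := fun π : Equiv.Perm (Fin K) => fa π t)
      (fun π _ => (hfa π t).1)
      (fun π => Real.exp (-η * ∑ s ∈ Finset.range t, l (fa π s) s))]
    exact Finset.sum_congr rfl (fun j hj => key t j hj)
  rw [key t i hi, hden]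
end

section
/- Assume experts die in the order e_1, e_2, … (known in advance), one per night. In the set of effective orderings ℰ, the number of effective orderings whose first element is e_i equals ⌈2^{K−i−1}⌉. -/
/-!
A behaviour `b` is determined by its set `T` of fixed points, which always contains the last
expert `⊤`: on day `s` the first alive expert is the least element of `T` that is at least `s`.
Conversely every such `T` arises, from an ordering that lists `T` increasingly before all the
other experts. The behaviours with `b ⊥ = i` are exactly those with `min T = i`, so they
correspond to the subsets of the open interval `(i, ⊤)`.
-/

open Finset

namespace EffectiveOrdering

section LinearOrder

variable {α β γ : Type*} [LinearOrder α] [LinearOrder β] [LinearOrder γ]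

def IsFirstAbove (r : α → β) (b : α → α) : Prop :=
  ∀ s, s ≤ b s ∧ ∀ e, s ≤ e → r (b s) ≤ r e

theorem IsFirstAbove.congr_rank {r : α → β} {r' : α → γ} (hrr' : ∀ x y, r' x ≤ r' y ↔ r x ≤ r y)
    {b : α → α} (hb : IsFirstAbove r b) : IsFirstAbove r' b := fun s =>
  ⟨(hb s).1, fun e hse => (hrr' _ _).2 ((hb s).2 e hse)⟩

theorem IsFirstAbove.unique {r : α → β} (hr : Function.Injective r) {b b' : α → α}
    (hb : IsFirstAbove r b) (hb' : IsFirstAbove r b') : b = b' :=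
  funext fun s => hr (le_antisymm ((hb s).2 _ (hb' s).1) ((hb' s).2 _ (hb s).1))

theorem IsFirstAbove.apply_eq_of_le {r : α → β} (hr : Function.Injective r) {b : α → α}
    (hb : IsFirstAbove r b) {s t : α} (hst : s ≤ t) (htb : t ≤ b s) : b t = b s :=
  hr (le_antisymm ((hb t).2 _ htb) ((hb s).2 _ (hst.trans (hb t).1)))

end LinearOrder

section Top

variable {α β : Type*} [LinearOrder α] [OrderTop α] [LinearOrder β]

def nextIn (T : Finset α) (s : α) : α :=
  ((insert ⊤ T).filter (s ≤ ·)).min' ⟨⊤, by simp⟩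

theorem le_nextIn (T : Finset α) (s : α) : s ≤ nextIn T s :=
  (mem_filter.mp (min'_mem _ _)).2

theorem nextIn_mem (T : Finset α) (s : α) : nextIn T s ∈ insert ⊤ T :=
  (mem_filter.mp (min'_mem _ _)).1

theorem nextIn_le {T : Finset α} {s x : α} (hx : x ∈ insert ⊤ T) (hsx : s ≤ x) :
    nextIn T s ≤ x :=
  min'_le _ _ (mem_filter.mpr ⟨hx, hsx⟩)

theorem nextIn_eq_self_iff {T : Finset α} {x : α} : nextIn T x = x ↔ x ∈ insert ⊤ T :=
  ⟨fun h => h ▸ nextIn_mem T x, fun h => le_antisymm (nextIn_le h le_rfl) (le_nextIn T x)⟩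

theorem nextIn_congr {T T' : Finset α} (h : insert ⊤ T = insert ⊤ T') : nextIn T = nextIn T' := by
  funext s
  simp only [nextIn, h]

theorem insert_top_eq_of_nextIn_eq {T T' : Finset α} (h : nextIn T = nextIn T') :
    insert ⊤ T = insert ⊤ T' := by
  ext x
  rw [← nextIn_eq_self_iff, ← nextIn_eq_self_iff, h]

def nextInRank (T : Finset α) (x : α) : Lex (Bool × α) :=
  toLex (decide (x ∉ insert ⊤ T), x)

theorem nextInRank_injective (T : Finset α) : Function.Injective (nextInRank T) :=
  fun _ _ h => congrArg Prod.snd (toLex.injective h)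

theorem isFirstAbove_nextIn (T : Finset α) : IsFirstAbove (nextInRank T) (nextIn T) := by
  intro s
  refine ⟨le_nextIn T s, fun e hse => ?_⟩
  have hmem := nextIn_mem T s
  by_cases he : e ∈ insert ⊤ T
  · exact Prod.Lex.toLex_le_toLex.mpr
      (Or.inr ⟨by simp [hmem, he], nextIn_le he hse⟩)
  · exact Prod.Lex.toLex_le_toLex.mpr (Or.inl (by simp [hmem, he]))

theorem IsFirstAbove.eq_nextIn [Fintype α] {r : α → β} (hr : Function.Injective r)
    {b : α → α} (hb : IsFirstAbove r b) : b = nextIn {x | b x = x} := by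
  funext s
  have hfix : b (b s) = b s := hb.apply_eq_of_le hr (hb s).1 le_rfl
  refine le_antisymm ?_ (nextIn_le (by simp [hfix]) (hb s).1)
  refine le_min' _ _ _ fun x hx => ?_
  obtain ⟨hxT, hsx⟩ := mem_filter.mp hx
  by_contra! hxb
  have hbx : b x = b s := hb.apply_eq_of_le hr hsx hxb.le
  rcases mem_insert.mp hxT with rfl | hxT
  · exact (le_top.trans_lt hxb).false
  · exact hxb.ne ((mem_filter.mp hxT).2.symm.trans hbx)

end Top

section Bounded

variable {α : Type*} [LinearOrder α] [BoundedOrder α] [LocallyFiniteOrder α]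

theorem nextIn_insert_bot {i : α} {S : Finset α} (hS : S ⊆ Ioo i ⊤) :
    nextIn (insert i S) ⊥ = i := by
  refine le_antisymm (nextIn_le (by simp) bot_le) ?_
  rcases mem_insert.mp (nextIn_mem (insert i S) ⊥) with h | h
  · exact h ▸ le_top
  rcases mem_insert.mp h with h | h
  · exact h.ge
  · exact (mem_Ioo.mp (hS h)).1.le

theorem insert_top_insert_inter_Ioo {i : α} {T : Finset α} (h : nextIn T ⊥ = i) :
    insert ⊤ (insert i (T ∩ Ioo i ⊤)) = insert ⊤ T := by
  have hiT : i ∈ insert ⊤ T := h ▸ nextIn_mem T ⊥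
  have hge : ∀ x ∈ insert ⊤ T, i ≤ x := fun x hx => h ▸ nextIn_le hx bot_le
  ext x
  simp only [mem_insert, mem_inter, mem_Ioo] at hiT hge ⊢
  constructor
  · rintro (rfl | rfl | ⟨hx, -⟩)
    exacts [Or.inl rfl, hiT, Or.inr hx]
  · rintro (rfl | hx)
    · exact Or.inl rfl
    rcases (hge x (Or.inr hx)).lt_or_eq with hix | rfl
    · rcases (le_top : x ≤ ⊤).lt_or_eq with hxt | rfl
      exacts [Or.inr (Or.inr ⟨hx, hix, hxt⟩), Or.inl rfl]
    · exact Or.inr (Or.inl rfl)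

theorem inter_Ioo_insert_top_insert {i : α} {S : Finset α} (hS : S ⊆ Ioo i ⊤) :
    insert ⊤ (insert i S) ∩ Ioo i ⊤ = S := by
  ext x
  have := @hS x
  simp only [mem_inter, mem_insert, mem_Ioo] at this ⊢
  constructor
  · rintro ⟨rfl | rfl | hx, hix, hxt⟩
    exacts [absurd hxt (lt_irrefl _), absurd hix (lt_irrefl _), hx]
  · exact fun hx => ⟨Or.inr (Or.inr hx), this hx⟩

theorem filter_image_nextIn_eq [Fintype α] (i : α) :
    (univ.image nextIn).filter (fun b => b ⊥ = i) =
      (Ioo i ⊤).powerset.image (fun S => nextIn (insert i S)) := by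
  ext b
  simp only [mem_filter, mem_image, mem_univ, true_and, mem_powerset]
  constructor
  · rintro ⟨⟨T, rfl⟩, hT⟩
    exact ⟨T ∩ Ioo i ⊤, inter_subset_right,
      nextIn_congr (insert_top_insert_inter_Ioo hT)⟩
  · rintro ⟨S, hS, rfl⟩
    exact ⟨⟨_, rfl⟩, nextIn_insert_bot hS⟩

theorem card_filter_image_nextIn [Fintype α] (i : α) :
    ((univ.image nextIn).filter (fun b => b ⊥ = i)).card = 2 ^ (Ioo i ⊤).card := by
  rw [filter_image_nextIn_eq, card_image_of_injOn, card_powerset]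
  intro S hS S' hS' h
  rw [← inter_Ioo_insert_top_insert (mem_powerset.mp hS),
    ← inter_Ioo_insert_top_insert (mem_powerset.mp hS'), insert_top_eq_of_nextIn_eq h]

end Bounded

theorem _root_.Tuple.sort_symm_le_iff {n : ℕ} {β : Type*} [LinearOrder β] {f : Fin n → β}
    (hf : Function.Injective f) (x y : Fin n) :
    (Tuple.sort f).symm x ≤ (Tuple.sort f).symm y ↔ f x ≤ f y := by
  have hmono : StrictMono (f ∘ Tuple.sort f) :=
    (Tuple.monotone_sort f).strictMono_of_injective (hf.comp (Tuple.sort f).injective)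
  simpa using (hmono.le_iff_le (a := (Tuple.sort f).symm x) (b := (Tuple.sort f).symm y)).symm

theorem exists_perm_isFirstAbove {n : ℕ} {β : Type*} [LinearOrder β] {r : Fin n → β}
    (hr : Function.Injective r) {b : Fin n → Fin n} (hb : IsFirstAbove r b) :
    ∃ π : Equiv.Perm (Fin n), IsFirstAbove π.symm b :=
  ⟨Tuple.sort r, hb.congr_rank (Tuple.sort_symm_le_iff hr)⟩

theorem image_eq_image_nextIn {n : ℕ} [NeZero n]
    (beh : Equiv.Perm (Fin n) → Fin n → Fin n) (hbeh : ∀ π, IsFirstAbove π.symm (beh π)) :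
    univ.image beh = univ.image nextIn := by
  ext b
  simp only [mem_image, mem_univ, true_and]
  constructor
  · rintro ⟨π, rfl⟩
    exact ⟨_, ((hbeh π).eq_nextIn π.symm.injective).symm⟩
  · rintro ⟨T, rfl⟩
    obtain ⟨π, hπ⟩ := exists_perm_isFirstAbove (nextInRank_injective T) (isFirstAbove_nextIn T)
    exact ⟨π, (hbeh π).unique π.symm.injective hπ⟩

end EffectiveOrdering

open EffectiveOrdering in
/-- Experts are 0-indexed, so the paper's `⌈2^{K-i-1}⌉` becomes `2 ^ (K - i - 2)`; the truncated
subtraction gives `2 ^ 0 = 1` for the last expert, matching `⌈2^{-1}⌉`. -/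
theorem effective_orderings_starting_count (K : ℕ) (hK : 0 < K)
    (beh : Equiv.Perm (Fin K) → Fin K → Fin K)
    (hbeh : ∀ (π : Equiv.Perm (Fin K)) (s : Fin K),
      (s : ℕ) ≤ (beh π s : ℕ) ∧
      ∀ e : Fin K, (s : ℕ) ≤ (e : ℕ) → π.symm (beh π s) ≤ π.symm e)
    (i : Fin K) :
    (((Finset.univ : Finset (Equiv.Perm (Fin K))).image beh).filter
        (fun b => b ⟨0, hK⟩ = i)).card = 2 ^ (K - (i : ℕ) - 2) := by
  have : NeZero K := ⟨hK.ne'⟩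
  have hfirst : ∀ π, IsFirstAbove π.symm (beh π) := fun π s =>
    ⟨Fin.val_fin_le.mp (hbeh π s).1, fun e hse => (hbeh π s).2 e (Fin.val_fin_le.mpr hse)⟩
  have hbot : (⟨0, hK⟩ : Fin K) = ⊥ := rfl
  rw [hbot, image_eq_image_nextIn beh hfirst, card_filter_image_nextIn, Fin.card_Ioo, Fin.val_top]
  congr 1
  omega
end

section
/- Assume experts die in order e_1, e_2, …, one per night. At any round t at which experts e_1,…,e_{i−1} are dead and e_i,…,e_K are alive, the multiset of reduced behaviors of effective orderings starting with e_j (for any alive e_j) consists of exactly 2^{i−1} copies of the reduced behaviors of effective orderings starting with e_j at round 1. -/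
namespace CopiesLemmaAux

variable {K : ℕ}

/-- The last expert `K - 1`. -/
def lst (hK : 0 < K) : Fin K := ⟨K - 1, by omega⟩

theorem le_lst (hK : 0 < K) (s : Fin K) : s ≤ lst hK := by
  rw [Fin.le_def]; have := s.isLt; simp [lst]; omega

/-- The first alive element of `insert (lst hK) S` at round `s`:
the minimal element `v` of `insert (lst hK) S` with `s ≤ v`. -/
def g (hK : 0 < K) (S : Finset (Fin K)) (s : Fin K) : Fin K :=
  ((insert (lst hK) S).filter (fun v => s ≤ v)).min'
    ⟨lst hK, Finset.mem_filter.2 ⟨Finset.mem_insert_self _ _, le_lst hK s⟩⟩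

theorem g_mem (hK : 0 < K) (S : Finset (Fin K)) (s : Fin K) :
    g hK S s ∈ insert (lst hK) S :=
  (Finset.mem_filter.1 (Finset.min'_mem _ _)).1

theorem le_g (hK : 0 < K) (S : Finset (Fin K)) (s : Fin K) : s ≤ g hK S s :=
  (Finset.mem_filter.1 (Finset.min'_mem _ _)).2

theorem g_min (hK : 0 < K) {S : Finset (Fin K)} {s e : Fin K}
    (h1 : e ∈ insert (lst hK) S) (h2 : s ≤ e) : g hK S s ≤ e :=
  Finset.min'_le _ _ (Finset.mem_filter.2 ⟨h1, h2⟩)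

theorem g_eq (hK : 0 < K) {S : Finset (Fin K)} {s x : Fin K}
    (h1 : x ∈ insert (lst hK) S) (h2 : s ≤ x)
    (h3 : ∀ y ∈ insert (lst hK) S, s ≤ y → x ≤ y) : g hK S s = x :=
  le_antisymm (g_min hK h1 h2) (h3 _ (g_mem hK S s) (le_g hK S s))

theorem mem_iff_g_eq (hK : 0 < K) {S : Finset (Fin K)} (hS : lst hK ∈ S) (v : Fin K) :
    v ∈ S ↔ g hK S v = v := by
  constructor
  · intro hv; exact g_eq hK (Finset.mem_insert_of_mem hv) le_rfl (fun y _ h => h)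
  · intro h
    have h2 := g_mem hK S v
    rw [h, Finset.mem_insert] at h2
    rcases h2 with h'|h'
    · rw [h']; exact hS
    · exact h'

theorem argmin_unique (π : Equiv.Perm (Fin K)) {s a b : Fin K}
    (ha1 : s ≤ a) (ha2 : ∀ e, s ≤ e → π.symm a ≤ π.symm e)
    (hb1 : s ≤ b) (hb2 : ∀ e, s ≤ e → π.symm b ≤ π.symm e) : a = b :=
  π.symm.injective (le_antisymm (ha2 b hb1) (hb2 a ha1))

theorem lst_mem_image (hK : 0 < K) (beh : Equiv.Perm (Fin K) → Fin K → Fin K)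
    (hbeh : ∀ (π : Equiv.Perm (Fin K)) (s : Fin K),
      (s : ℕ) ≤ (beh π s : ℕ) ∧
      ∀ e : Fin K, (s : ℕ) ≤ (e : ℕ) → π.symm (beh π s) ≤ π.symm e)
    (π : Equiv.Perm (Fin K)) : lst hK ∈ Finset.image (beh π) Finset.univ := by
  refine Finset.mem_image.2 ⟨lst hK, Finset.mem_univ _, ?_⟩
  have h1 := (hbeh π (lst hK)).1
  have h2 := (beh π (lst hK)).isLt
  apply Fin.ext; simp only [lst] at h1 ⊢; omega

theorem beh_eq (hK : 0 < K) (beh : Equiv.Perm (Fin K) → Fin K → Fin K)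
    (hbeh : ∀ (π : Equiv.Perm (Fin K)) (s : Fin K),
      (s : ℕ) ≤ (beh π s : ℕ) ∧
      ∀ e : Fin K, (s : ℕ) ≤ (e : ℕ) → π.symm (beh π s) ≤ π.symm e)
    (π : Equiv.Perm (Fin K)) :
    beh π = g hK (Finset.image (beh π) Finset.univ) := by
  have hins : insert (lst hK) (Finset.image (beh π) Finset.univ)
      = Finset.image (beh π) Finset.univ :=
    Finset.insert_eq_self.2 (lst_mem_image hK beh hbeh π)
  funext s
  symm
  apply g_eq hK
  · rw [hins]; exact Finset.mem_image.2 ⟨s, Finset.mem_univ _, rfl⟩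
  · rw [Fin.le_def]; exact (hbeh π s).1
  · rintro y hy hsy
    rw [hins] at hy
    obtain ⟨s', -, rfl⟩ := Finset.mem_image.1 hy
    by_contra hlt
    push_neg at hlt
    have h1 : π.symm (beh π s) ≤ π.symm (beh π s') :=
      (hbeh π s).2 _ (Fin.le_def.1 hsy)
    have h2 : π.symm (beh π s') ≤ π.symm (beh π s) := by
      apply (hbeh π s').2
      have h3 := (hbeh π s').1
      have h4 := Fin.lt_def.1 hlt
      omega
    exact hlt.ne' (π.symm.injective (le_antisymm h1 h2))

theorem indexOf_sort_le {T : Finset (Fin K)} {u v : Fin K} (hu : u ∈ T) (hv : v ∈ T)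
    (huv : u ≤ v) :
    (T.sort (· ≤ ·)).idxOf u ≤ (T.sort (· ≤ ·)).idxOf v := by
  by_contra h
  push_neg at h
  have hu' : (T.sort (· ≤ ·)).idxOf u < (T.sort (· ≤ ·)).length :=
    List.idxOf_lt_length_iff.2 ((Finset.mem_sort _).2 hu)
  have hv' : (T.sort (· ≤ ·)).idxOf v < (T.sort (· ≤ ·)).length :=
    List.idxOf_lt_length_iff.2 ((Finset.mem_sort _).2 hv)
  have h2 := (Finset.sortedLT_sort T).pairwise.rel_get_of_lt (a := ⟨_, hv'⟩) (b := ⟨_, hu'⟩) h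
  rw [List.idxOf_get, List.idxOf_get] at h2
  exact absurd huv (not_le.2 h2)

/-- Every finset `S` arises as the "first-alive" function of some ordering:
the one listing `insert (lst hK) S` first, in increasing order. -/
theorem exists_perm (hK : 0 < K) (S : Finset (Fin K)) :
    ∃ π : Equiv.Perm (Fin K), ∀ s e : Fin K, s ≤ e → π.symm (g hK S s) ≤ π.symm e := by
  classical
  set S' := insert (lst hK) S with hS'
  set L : List (Fin K) := S'.sort (· ≤ ·) ++ S'ᶜ.sort (· ≤ ·) with hL
  have hnd : L.Nodup := by
    refine List.Nodup.append (Finset.sort_nodup _ _) (Finset.sort_nodup _ _) ?_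
    intro x hx hx'
    rw [Finset.mem_sort] at hx hx'
    exact (Finset.mem_compl.1 hx') hx
  have hmem : ∀ x : Fin K, x ∈ L := by
    intro x
    rcases em (x ∈ S') with h|h
    · exact List.mem_append_left _ ((Finset.mem_sort _).2 h)
    · exact List.mem_append_right _ ((Finset.mem_sort _).2 (Finset.mem_compl.2 h))
  have hlen : L.length = K := by
    rw [hL, List.length_append, Finset.length_sort, Finset.length_sort,
      Finset.card_add_card_compl, Fintype.card_fin]
  refine ⟨(finCongr hlen.symm).trans (List.Nodup.getEquivOfForallMemList L hnd hmem), ?_⟩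
  have hsymm : ∀ x : Fin K,
      ((((finCongr hlen.symm).trans
        (List.Nodup.getEquivOfForallMemList L hnd hmem)).symm x : Fin K) : ℕ)
        = L.idxOf x := fun x => rfl
  intro s e hse
  rw [Fin.le_def, hsymm, hsymm]
  by_cases he : e ∈ S'
  · have hle : g hK S s ≤ e := g_min hK he hse
    rw [hL, List.idxOf_append_of_mem ((Finset.mem_sort _).2 (g_mem hK S s)),
      List.idxOf_append_of_mem ((Finset.mem_sort _).2 he)]
    exact indexOf_sort_le (g_mem hK S s) he hle
  · have h1 : L.idxOf (g hK S s) < (S'.sort (· ≤ ·)).length := by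
      rw [hL, List.idxOf_append_of_mem ((Finset.mem_sort _).2 (g_mem hK S s))]
      exact List.idxOf_lt_length_iff.2 ((Finset.mem_sort _).2 (g_mem hK S s))
    have h2 : L.idxOf e = (S'.sort (· ≤ ·)).length + (S'ᶜ.sort (· ≤ ·)).idxOf e := by
      rw [hL]
      exact List.idxOf_append_of_notMem (fun hc => he ((Finset.mem_sort _).1 hc))
    omega

theorem exists_beh (hK : 0 < K) (beh : Equiv.Perm (Fin K) → Fin K → Fin K)
    (hbeh : ∀ (π : Equiv.Perm (Fin K)) (s : Fin K),
      (s : ℕ) ≤ (beh π s : ℕ) ∧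
      ∀ e : Fin K, (s : ℕ) ≤ (e : ℕ) → π.symm (beh π s) ≤ π.symm e)
    (S : Finset (Fin K)) : ∃ π, beh π = g hK S := by
  obtain ⟨π, hπ⟩ := exists_perm hK S
  refine ⟨π, funext fun s => ?_⟩
  apply argmin_unique π (s := s)
  · rw [Fin.le_def]; exact (hbeh π s).1
  · intro e h; exact (hbeh π s).2 e (Fin.le_def.1 h)
  · exact le_g hK S s
  · intro e h; exact hπ s e h

theorem g_union (hK : 0 < K) {S T : Finset (Fin K)} {t : ℕ} (hT : ∀ v ∈ T, (v : ℕ) < t)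
    {s : Fin K} (hs : t ≤ (s : ℕ)) : g hK (S ∪ T) s = g hK S s := by
  apply g_eq hK
  · rcases Finset.mem_insert.1 (g_mem hK S s) with h|h
    · rw [h]; exact Finset.mem_insert_self _ _
    · exact Finset.mem_insert_of_mem (Finset.mem_union_left _ h)
  · exact le_g hK S s
  · intro y hy hsy
    rcases Finset.mem_insert.1 hy with h|h
    · exact g_min hK (h ▸ Finset.mem_insert_self _ _) hsy
    · rcases Finset.mem_union.1 h with h|h
      · exact g_min hK (Finset.mem_insert_of_mem h) hsy
      · exact absurd (le_trans hs (Fin.le_def.1 hsy)) (not_le.2 (hT y h))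

theorem g_low (hK : 0 < K) {S : Finset (Fin K)} {t : ℕ} (hS : ∀ v ∈ S, t ≤ (v : ℕ))
    {s s' : Fin K} (hs : (s : ℕ) ≤ t) (hs' : (s' : ℕ) ≤ t) :
    g hK S s = g hK S s' := by
  have key : ∀ y ∈ insert (lst hK) S, (s' : ℕ) ≤ (y : ℕ) := by
    intro y hy
    rcases Finset.mem_insert.1 hy with h|h
    · rw [h]; exact Fin.le_def.1 (le_lst hK s')
    · exact le_trans hs' (hS y h)
  apply g_eq hK
  · exact g_mem hK S s'
  · rw [Fin.le_def]
    rcases Finset.mem_insert.1 (g_mem hK S s') with h|h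
    · rw [h]; exact Fin.le_def.1 (le_lst hK s)
    · exact le_trans hs (hS _ h)
  · intro y hy _
    exact g_min hK hy (Fin.le_def.2 (key y hy))

theorem dedup_drop (hK : 0 < K) {S : Finset (Fin K)} {t : ℕ} (ht : t < K)
    (hS : ∀ v ∈ S, t ≤ (v : ℕ)) :
    (((List.finRange K).drop t).map (g hK S)).dedup
      = ((List.finRange K).map (g hK S)).dedup := by
  suffices h : ∀ n, n ≤ t →
      (((List.finRange K).drop (t - n)).map (g hK S)).dedup
        = (((List.finRange K).drop t).map (g hK S)).dedup by
    have h0 := h t le_rfl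
    simp only [Nat.sub_self, List.drop_zero] at h0
    exact h0.symm
  intro n hn
  induction n with
  | zero => simp
  | succ n ih =>
    have ih' := ih (by omega)
    have h1 : t - (n + 1) < (List.finRange K).length := by
      rw [List.length_finRange]; omega
    have h2 : t - n < (List.finRange K).length := by
      rw [List.length_finRange]; omega
    have heq : t - (n + 1) + 1 = t - n := by omega
    rw [List.drop_eq_getElem_cons h1, List.map_cons, heq]
    rw [List.dedup_cons_of_mem ?hm]
    case hm =>
      rw [List.drop_eq_getElem_cons h2, List.map_cons]
      refine List.mem_cons.2 (Or.inl ?_)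
      simp only [List.getElem_finRange]
      exact g_low hK hS (by simp) (by simp)
    exact ih'

theorem g_eq_iff (hK : 0 < K) {S : Finset (Fin K)} (hlst : lst hK ∈ S) {t : ℕ} (ht : t < K)
    {j : Fin K} (hj : t ≤ (j : ℕ)) :
    g hK S ⟨t, ht⟩ = j ↔ j ∈ S ∧ ∀ v ∈ S, t ≤ (v : ℕ) → j ≤ v := by
  have hins : insert (lst hK) S = S := Finset.insert_eq_self.2 hlst
  constructor
  · intro h
    constructor
    · have hm := g_mem hK S ⟨t, ht⟩
      rw [hins] at hm
      rw [← h]; exact hm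
    · intro v hv htv
      rw [← h]
      exact g_min hK (Finset.mem_insert_of_mem hv) (Fin.le_def.2 htv)
  · rintro ⟨hjS, hmin⟩
    apply g_eq hK (Finset.mem_insert_of_mem hjS) (Fin.le_def.2 hj)
    intro y hy hty
    rcases Finset.mem_insert.1 hy with h|h
    · rw [h]; exact le_lst hK j
    · exact hmin y h (Fin.le_def.1 hty)

theorem main_bij (hK : 0 < K) {t : ℕ} (ht : t < K) {j : Fin K} (hj : t ≤ (j : ℕ)) :
    Multiset.filter (fun S => g hK S ⟨t, ht⟩ = j)
        (Finset.filter (fun S => lst hK ∈ S) Finset.univ).val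
      = (Finset.powerset (Finset.filter (fun v : Fin K => (v : ℕ) < t) Finset.univ)).val.bind
          (fun T => (Multiset.filter (fun S => g hK S ⟨0, hK⟩ = j)
              (Finset.filter (fun S => lst hK ∈ S) Finset.univ).val).map
                (fun S' => S' ∪ T)) := by
  classical
  set B := Multiset.filter (fun S => g hK S ⟨0, hK⟩ = j)
      (Finset.filter (fun S : Finset (Fin K) => lst hK ∈ S) Finset.univ).val with hB
  have hBmem : ∀ S' ∈ B, lst hK ∈ S' ∧ j ∈ S' ∧ ∀ v ∈ S', (j : ℕ) ≤ (v : ℕ) := by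
    intro S' hS'
    rw [hB, Multiset.mem_filter] at hS'
    obtain ⟨h1, h2⟩ := hS'
    have hlst : lst hK ∈ S' := (Finset.mem_filter.1 (Eq.mp Finset.mem_val h1)).2
    rw [g_eq_iff hK hlst hK (Nat.zero_le _)] at h2
    exact ⟨hlst, h2.1, fun v hv => Fin.le_def.1 (h2.2 v hv (Nat.zero_le _))⟩
  have hTlt : ∀ T ∈ (Finset.powerset (Finset.filter (fun v : Fin K => (v : ℕ) < t)
      Finset.univ)).val, ∀ v ∈ T, (v : ℕ) < t := by
    intro T hT v hv
    exact (Finset.mem_filter.1 ((Finset.mem_powerset.1 (Eq.mp Finset.mem_val hT)) hv)).2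
  have nodB : B.Nodup := Multiset.Nodup.filter _ (Finset.nodup _)
  have nodL : (Multiset.filter (fun S => g hK S ⟨t, ht⟩ = j)
      (Finset.filter (fun S : Finset (Fin K) => lst hK ∈ S) Finset.univ).val).Nodup :=
    Multiset.Nodup.filter _ (Finset.nodup _)
  have nodR : ((Finset.powerset (Finset.filter (fun v : Fin K => (v : ℕ) < t)
      Finset.univ)).val.bind
        (fun T => B.map (fun S' => S' ∪ T))).Nodup := by
    rw [Multiset.nodup_bind]
    constructor
    · intro T hT
      refine Multiset.Nodup.map_on ?_ nodB
      intro S₁ h₁ S₂ h₂ heq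
      have f₁ := hBmem S₁ h₁
      have f₂ := hBmem S₂ h₂
      ext v
      constructor
      · intro hv
        have : v ∈ S₂ ∪ T := by rw [← heq]; exact Finset.mem_union_left _ hv
        rcases Finset.mem_union.1 this with h|h
        · exact h
        · have := hTlt T hT v h
          have := f₁.2.2 v hv
          omega
      · intro hv
        have : v ∈ S₁ ∪ T := by rw [heq]; exact Finset.mem_union_left _ hv
        rcases Finset.mem_union.1 this with h|h
        · exact h
        · have := hTlt T hT v h
          have := f₂.2.2 v hv
          omega
    · refine Multiset.Nodup.pairwise ?_ (Finset.nodup _)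
      intro T₁ h₁ T₂ h₂ hne
      refine Multiset.disjoint_left.2 ?_
      intro U hU₁ hU₂
      obtain ⟨S₁, hS₁, rfl⟩ := Multiset.mem_map.1 hU₁
      obtain ⟨S₂, hS₂, heq⟩ := Multiset.mem_map.1 hU₂
      apply hne
      have f₁ := hBmem S₁ hS₁
      have f₂ := hBmem S₂ hS₂
      ext v
      constructor
      · intro hv
        have hvt := hTlt T₁ h₁ v hv
        have : v ∈ S₂ ∪ T₂ := by rw [heq]; exact Finset.mem_union_right _ hv
        rcases Finset.mem_union.1 this with h|h
        · have := f₂.2.2 v h; omega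
        · exact h
      · intro hv
        have hvt := hTlt T₂ h₂ v hv
        have : v ∈ S₁ ∪ T₁ := by rw [← heq]; exact Finset.mem_union_right _ hv
        rcases Finset.mem_union.1 this with h|h
        · have := f₁.2.2 v h; omega
        · exact h
  rw [Multiset.Nodup.ext nodL nodR]
  intro U
  rw [Multiset.mem_filter, Multiset.mem_bind]
  constructor
  · rintro ⟨hU𝒮, hUg⟩
    have hlst : lst hK ∈ U := (Finset.mem_filter.1 (Eq.mp Finset.mem_val hU𝒮)).2
    rw [g_eq_iff hK hlst ht hj] at hUg
    refine ⟨U.filter (fun v : Fin K => (v : ℕ) < t), ?_, ?_⟩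
    · rw [Finset.mem_val]
      exact Finset.mem_powerset.2 (fun v hv => Finset.mem_filter.2
        ⟨Finset.mem_univ _, (Finset.mem_filter.1 hv).2⟩)
    · rw [Multiset.mem_map]
      have hlst' : lst hK ∈ U.filter (fun v : Fin K => t ≤ (v : ℕ)) := by
        refine Finset.mem_filter.2 ⟨hlst, ?_⟩
        simp only [lst]; omega
      refine ⟨U.filter (fun v : Fin K => t ≤ (v : ℕ)), ?_, ?_⟩
      · rw [hB, Multiset.mem_filter]
        refine ⟨Eq.mpr Finset.mem_val (Finset.mem_filter.2 ⟨Finset.mem_univ _, hlst'⟩), ?_⟩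
        rw [g_eq_iff hK hlst' hK (Nat.zero_le _)]
        refine ⟨Finset.mem_filter.2 ⟨hUg.1, hj⟩, ?_⟩
        intro v hv _
        have := Finset.mem_filter.1 hv
        exact hUg.2 v this.1 this.2
      · ext v
        simp only [Finset.mem_union, Finset.mem_filter]
        constructor
        · rintro (⟨h, -⟩|⟨h, -⟩) <;> exact h
        · intro h
          rcases le_or_gt t (v : ℕ) with h'|h'
          · exact Or.inl ⟨h, h'⟩
          · exact Or.inr ⟨h, h'⟩
  · rintro ⟨T, hT, hU⟩
    obtain ⟨S', hS', rfl⟩ := Multiset.mem_map.1 hU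
    obtain ⟨hlst', hjS', hge⟩ := hBmem S' hS'
    constructor
    · exact Eq.mpr Finset.mem_val (Finset.mem_filter.2
        ⟨Finset.mem_univ _, Finset.mem_union_left _ hlst'⟩)
    · rw [g_union hK (hTlt T hT) (le_refl t)]
      rw [g_eq_iff hK hlst' ht hj]
      exact ⟨hjS', fun v hv _ => Fin.le_def.2 (hge v hv)⟩

theorem mem_drop_ge {t : ℕ} {s : Fin K} (h : s ∈ (List.finRange K).drop t) : t ≤ (s : ℕ) := by
  obtain ⟨i, hi, hgi⟩ := List.mem_iff_getElem.1 h
  rw [List.getElem_drop] at hgi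
  rw [← hgi]
  simp

theorem bind_const {α β : Type*} (s : Multiset α) (c : Multiset β) :
    s.bind (fun _ => c) = Multiset.card s • c := by
  induction s using Multiset.induction with
  | empty => simp
  | cons a s ih =>
    rw [Multiset.cons_bind, ih, Multiset.card_cons, succ_nsmul, add_comm]

theorem card_filter_lt {t : ℕ} (ht : t < K) :
    (Finset.filter (fun v : Fin K => (v : ℕ) < t) Finset.univ).card = t := by
  have himg : Finset.filter (fun v : Fin K => (v : ℕ) < t) Finset.univ
      = Finset.image (fun i : Fin t => (⟨(i : ℕ), by omega⟩ : Fin K)) Finset.univ := by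
    ext v
    simp only [Finset.mem_filter, Finset.mem_univ, true_and, Finset.mem_image]
    constructor
    · intro hv; exact ⟨⟨(v : ℕ), hv⟩, by apply Fin.ext; rfl⟩
    · rintro ⟨i, rfl⟩; exact i.isLt
  rw [himg, Finset.card_image_of_injective _ (fun a b hab => Fin.ext
    (by simpa using congrArg Fin.val hab)), Finset.card_univ, Fintype.card_fin]

end CopiesLemmaAux

/-- **Copies lemma.** Experts die in order, one per night: on day `s` the alive
experts are those `e` with `s ≤ e`.  `beh π` is the behavior (first-alive
prediction each day) of ordering `π`.  The reduction `λ(·, t)` of a behavior at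
day `t` is the deduplicated list of its predictions from day `t` onward.  If at
day `t` the experts `0, …, t-1` are dead and `j` is alive, then the multiset of
reduced behaviors of effective orderings predicting `j` at day `t` consists of
`2^t` copies of the multiset of their reduced behaviors at day `0`. -/
theorem copies_lemma (K t : ℕ) (ht : t < K) (j : Fin K) (hj : t ≤ (j : ℕ))
    (beh : Equiv.Perm (Fin K) → Fin K → Fin K)
    (hbeh : ∀ (π : Equiv.Perm (Fin K)) (s : Fin K),
      (s : ℕ) ≤ (beh π s : ℕ) ∧
      ∀ e : Fin K, (s : ℕ) ≤ (e : ℕ) → π.symm (beh π s) ≤ π.symm e) :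
    Multiset.map (fun b : Fin K → Fin K => (((List.finRange K).drop t).map b).dedup)
        ((((Finset.univ : Finset (Equiv.Perm (Fin K))).image beh).filter
          (fun b => b ⟨t, ht⟩ = j)).val)
      = 2 ^ t •
        Multiset.map (fun b : Fin K → Fin K => ((List.finRange K).map b).dedup)
          ((((Finset.univ : Finset (Equiv.Perm (Fin K))).image beh).filter
            (fun b => b ⟨0, by omega⟩ = j)).val) := by
  classical
  have hK : 0 < K := by omega
  -- the image of `beh` is the image of `g` over finsets containing the last expert
  have hImage : Finset.image beh Finset.univ
      = Finset.image (CopiesLemmaAux.g hK)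
          (Finset.filter (fun S : Finset (Fin K) => CopiesLemmaAux.lst hK ∈ S)
            Finset.univ) := by
    apply Finset.ext; intro b
    simp only [Finset.mem_image, Finset.mem_filter, Finset.mem_univ, true_and]
    constructor
    · rintro ⟨π, rfl⟩
      exact ⟨Finset.image (beh π) Finset.univ,
        CopiesLemmaAux.lst_mem_image hK beh hbeh π,
        (CopiesLemmaAux.beh_eq hK beh hbeh π).symm⟩
    · rintro ⟨S, hS, rfl⟩
      obtain ⟨π, hπ⟩ := CopiesLemmaAux.exists_beh hK beh hbeh S
      exact ⟨π, hπ⟩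
  have hinj : Set.InjOn (CopiesLemmaAux.g hK)
      (Finset.filter (fun S : Finset (Fin K) => CopiesLemmaAux.lst hK ∈ S)
        Finset.univ) := by
    intro S hS S' hS' h
    have h1 : CopiesLemmaAux.lst hK ∈ S := (Finset.mem_filter.1 (Finset.mem_coe.1 hS)).2
    have h2 : CopiesLemmaAux.lst hK ∈ S' := (Finset.mem_filter.1 (Finset.mem_coe.1 hS')).2
    ext v
    rw [CopiesLemmaAux.mem_iff_g_eq hK h1 v, CopiesLemmaAux.mem_iff_g_eq hK h2 v, h]
  rw [hImage, Finset.filter_val, Finset.filter_val, Finset.image_val_of_injOn hinj,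
    Multiset.filter_map, Multiset.filter_map, Multiset.map_map, Multiset.map_map]
  simp only [Function.comp]
  rw [CopiesLemmaAux.main_bij hK ht hj, Multiset.map_bind]
  have hstep : ∀ T ∈ (Finset.powerset (Finset.filter (fun v : Fin K => (v : ℕ) < t)
      Finset.univ)).val,
      Multiset.map (fun S => (((List.finRange K).drop t).map (CopiesLemmaAux.g hK S)).dedup)
        ((Multiset.filter (fun S => CopiesLemmaAux.g hK S ⟨0, hK⟩ = j)
          (Finset.filter (fun S : Finset (Fin K) => CopiesLemmaAux.lst hK ∈ S)
            Finset.univ).val).map (fun S' => S' ∪ T))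
      = Multiset.map (fun S => ((List.finRange K).map (CopiesLemmaAux.g hK S)).dedup)
          (Multiset.filter (fun S => CopiesLemmaAux.g hK S ⟨0, hK⟩ = j)
            (Finset.filter (fun S : Finset (Fin K) => CopiesLemmaAux.lst hK ∈ S)
              Finset.univ).val) := by
    intro T hT
    rw [Multiset.map_map]
    refine Multiset.map_congr rfl ?_
    intro S' hS'
    have hTlt : ∀ v ∈ T, (v : ℕ) < t := fun v hv =>
      (Finset.mem_filter.1 ((Finset.mem_powerset.1 (Eq.mp Finset.mem_val hT)) hv)).2
    have hS'mem := Multiset.mem_filter.1 hS'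
    have hlst' : CopiesLemmaAux.lst hK ∈ S' :=
      (Finset.mem_filter.1 (Eq.mp Finset.mem_val hS'mem.1)).2
    have hge : ∀ v ∈ S', t ≤ (v : ℕ) := by
      have h2 := hS'mem.2
      rw [CopiesLemmaAux.g_eq_iff hK hlst' hK (Nat.zero_le _)] at h2
      intro v hv
      exact le_trans hj (Fin.le_def.1 (h2.2 v hv (Nat.zero_le _)))
    show (((List.finRange K).drop t).map (CopiesLemmaAux.g hK (S' ∪ T))).dedup
        = ((List.finRange K).map (CopiesLemmaAux.g hK S')).dedup
    rw [List.map_congr_left (fun s hs =>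
      CopiesLemmaAux.g_union hK hTlt (CopiesLemmaAux.mem_drop_ge hs))]
    exact CopiesLemmaAux.dedup_drop hK ht hge
  rw [Multiset.bind_congr hstep, CopiesLemmaAux.bind_const]
  have hcard : Multiset.card (Finset.powerset (Finset.filter
      (fun v : Fin K => (v : ℕ) < t) Finset.univ)).val = 2 ^ t := by
    rw [← Finset.card_def, Finset.card_powerset, CopiesLemmaAux.card_filter_lt ht]
  rw [hcard]
end

section
/- Assume experts die in order e_1, e_2, …. At round t when e_1,…,e_{i−1} are dead, the multiset λ(ℰ_{e_i}^t, t) equals (e_i) prepended to λ(⋃_{j=i+1}^K ℰ_{e_j}^t, t); in particular |ℰ_{e_i}^t| = |λ(⋃_{j=i+1}^K ℰ_{e_j}^t, t)|. -/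
/-!
The prediction function `beh π` of an ordering is determined by its fixed points, the experts it
ever predicts: `beh π s` is the least of them alive on day `s`. Conversely every such function
arises, by ranking its fixed points first. Making the dying expert `e_t` a fixed point is then a
bijection from the functions not predicting `e_t` on day `t` onto those that do; it changes no
prediction after day `t`, and since the old prediction of day `t` is also that of day `t + 1`,
it just prepends `e_t` to the reduced trace.
-/

open Function Equiv

lemma exists_perm_le_iff_of_injective {α β : Type*} [Fintype α] [LinearOrder α] [LinearOrder β]
    {f : α → β} (hf : Injective f) : ∃ σ : Perm α, ∀ a b, σ a ≤ σ b ↔ f a ≤ f b := by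
  classical
  have hS : Fintype.card (Set.range f) = Fintype.card α := Set.card_range_of_injective hf
  let o : Set.range f ≃o α :=
    (Fintype.orderIsoFinOfCardEq _ hS).symm.trans (Fintype.orderIsoFinOfCardEq α rfl)
  exact ⟨(Equiv.ofInjective f hf).trans o.toEquiv, fun _ _ => o.le_iff_le⟩

lemma List.mem_drop_finRange {n k : ℕ} {x : Fin n} : x ∈ (List.finRange n).drop k ↔ k ≤ x := by
  rw [List.mem_iff_getElem]
  simp only [List.getElem_drop, List.getElem_finRange, List.length_drop, List.length_finRange]
  constructor
  · rintro ⟨m, -, rfl⟩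
    simp
  · intro hk
    exact ⟨x - k, by omega, Fin.ext (by simp; omega)⟩

lemma List.drop_finRange_eq_cons {n k : ℕ} (hk : k < n) :
    (List.finRange n).drop k = (⟨k, hk⟩ : Fin n) :: (List.finRange n).drop (k + 1) := by
  rw [List.drop_eq_getElem_cons (by simpa using hk)]
  simp

variable {α : Type*} [LinearOrder α]

/-- The prediction functions of orderings (`IsFirstAlive.range_eq`): `v s` is the least fixed point
of `v` that is `≥ s`. -/
structure IsLeaderFn (v : α → α) : Prop where
  le_apply : ∀ s, s ≤ v s
  apply_eq : ∀ {s e}, s ≤ e → e ≤ v s → v e = v s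

namespace IsLeaderFn

variable {v : α → α} {i j s e : α}

lemma apply_apply (hv : IsLeaderFn v) (s : α) : v (v s) = v s :=
  hv.apply_eq (hv.le_apply s) le_rfl

lemma apply_le_of_apply_eq_self (hv : IsLeaderFn v) (hse : s ≤ e) (he : v e = e) : v s ≤ e := by
  by_contra! h
  exact h.ne (he ▸ hv.apply_eq hse h.le)

lemma apply_eq_of_covBy (hv : IsLeaderFn v) (hvi : v i ≠ i) (hij : i ⋖ j) : v j = v i :=
  hv.apply_eq hij.le (hij.ge_of_gt ((hv.le_apply i).lt_of_ne hvi.symm))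

end IsLeaderFn

/-- `π.symm e` is the rank of expert `e` in the ordering `π`; on day `s` the alive experts are the
`e ≥ s`. -/
def IsFirstAlive [Fintype α] (beh : Perm α → α → α) : Prop :=
  ∀ π s, s ≤ beh π s ∧ ∀ e, s ≤ e → π.symm (beh π s) ≤ π.symm e

namespace IsFirstAlive

variable [Fintype α] {beh : Perm α → α → α}

lemma eq_of_forall_le (hbeh : IsFirstAlive beh) {π : Perm α} {s x : α} (hsx : s ≤ x)
    (hmin : ∀ e, s ≤ e → π.symm x ≤ π.symm e) : beh π s = x :=
  π.symm.injective <| le_antisymm ((hbeh π s).2 x hsx) (hmin _ (hbeh π s).1)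

lemma isLeaderFn (hbeh : IsFirstAlive beh) (π : Perm α) : IsLeaderFn (beh π) where
  le_apply s := (hbeh π s).1
  apply_eq hse he := hbeh.eq_of_forall_le he fun _ he' => (hbeh π _).2 _ (hse.trans he')

lemma exists_eq_of_isLeaderFn (hbeh : IsFirstAlive beh) {v : α → α} (hv : IsLeaderFn v) :
    ∃ π, beh π = v := by
  classical
  -- rank the fixed points of `v` first, in increasing order
  obtain ⟨σ, hσ⟩ := exists_perm_le_iff_of_injective
    (f := fun e => toLex (decide (v e ≠ e), e)) fun a b h => congrArg Prod.snd (toLex.injective h)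
  refine ⟨σ.symm, funext fun s => hbeh.eq_of_forall_le (hv.le_apply s) fun e hse => ?_⟩
  rw [Equiv.symm_symm, hσ, Prod.Lex.toLex_le_toLex', hv.apply_apply]
  by_cases he : v e = e
  · simp [he, hv.apply_le_of_apply_eq_self hse he]
  · simp [he]

lemma range_eq (hbeh : IsFirstAlive beh) : Set.range beh = {v | IsLeaderFn v} :=
  Set.ext fun _ => ⟨fun ⟨π, hπ⟩ => hπ ▸ hbeh.isLeaderFn π, hbeh.exists_eq_of_isLeaderFn⟩

end IsFirstAlive

section InsertErase

variable {i j : α}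

/-- On leader functions, `insertLeader i` and `eraseLeader i j` add and remove the fixed point `i`;
`j` is the successor of `i`. -/
def insertLeader (i : α) (b : α → α) : α → α :=
  fun s => if s ≤ i ∧ b s = b i then i else b s

def eraseLeader (i j : α) (a : α → α) : α → α :=
  fun s => if a s = i then a j else a s

lemma insertLeader_self (b : α → α) : insertLeader i b i = i :=
  if_pos ⟨le_rfl, rfl⟩

lemma IsLeaderFn.insertLeader {b : α → α} (hb : IsLeaderFn b) (i : α) :
    IsLeaderFn (insertLeader i b) where
  le_apply s := by
    unfold _root_.insertLeader
    split_ifs with hs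
    exacts [hs.1, hb.le_apply s]
  apply_eq {s e} hse he := by
    unfold _root_.insertLeader at he ⊢
    by_cases hs : s ≤ i ∧ b s = b i
    · rw [if_pos hs] at he ⊢
      have hbe : b e = b s := hb.apply_eq hse (he.trans ((hb.le_apply i).trans hs.2.ge))
      exact if_pos ⟨he, hbe.trans hs.2⟩
    · rw [if_neg hs] at he ⊢
      have hbe : b e = b s := hb.apply_eq hse he
      rw [if_neg fun he' => hs ⟨hse.trans he'.1, hbe ▸ he'.2⟩, hbe]

lemma IsLeaderFn.eraseLeader {a : α → α} (ha : IsLeaderFn a) (hij : i ⋖ j) :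
    IsLeaderFn (eraseLeader i j a) where
  le_apply s := by
    unfold _root_.eraseLeader
    split_ifs with hs
    exacts [(hs ▸ ha.le_apply s).trans (hij.le.trans (ha.le_apply j)), ha.le_apply s]
  apply_eq {s e} hse he := by
    have hiaj : i < a j := hij.lt.trans_le (ha.le_apply j)
    unfold _root_.eraseLeader at he ⊢
    by_cases hs : a s = i
    · rw [if_pos hs] at he ⊢
      rcases le_or_gt e i with hei | hie
      · exact if_pos ((ha.apply_eq hse (hei.trans hs.ge)).trans hs)
      · have hae : a e = a j := ha.apply_eq (hij.ge_of_gt hie) he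
        rw [if_neg (hae ▸ hiaj.ne'), hae]
    · rw [if_neg hs] at he ⊢
      have hae : a e = a s := ha.apply_eq hse he
      rw [if_neg (hae ▸ hs), hae]

lemma eraseLeader_self_ne {a : α → α} (ha : IsLeaderFn a) (hai : a i = i) (hij : i ⋖ j) :
    eraseLeader i j a i ≠ i := by
  rw [eraseLeader, if_pos hai]
  exact (hij.lt.trans_le (ha.le_apply j)).ne'

lemma eraseLeader_insertLeader {b : α → α} (hb : IsLeaderFn b) (hbi : b i ≠ i) (hij : i ⋖ j) :
    eraseLeader i j (insertLeader i b) = b := by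
  have hj : insertLeader i b j = b j := if_neg fun h => hij.lt.not_ge h.1
  funext s
  by_cases hs : s ≤ i ∧ b s = b i
  · have hins : insertLeader i b s = i := if_pos hs
    rw [eraseLeader, if_pos hins, hj, hb.apply_eq_of_covBy hbi hij, hs.2]
  · have hins : insertLeader i b s = b s := if_neg hs
    have hbs : b s ≠ i := fun h => hbi (h ▸ hb.apply_apply s)
    rw [eraseLeader, hins, if_neg hbs]

lemma insertLeader_eraseLeader {a : α → α} (ha : IsLeaderFn a) (hai : a i = i) (hij : i ⋖ j) :
    insertLeader i (eraseLeader i j a) = a := by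
  have hi : eraseLeader i j a i = a j := if_pos hai
  funext s
  by_cases hs : a s = i
  · have hsi : s ≤ i := hs ▸ ha.le_apply s
    have hes : eraseLeader i j a s = a j := if_pos hs
    rw [insertLeader, if_pos ⟨hsi, hes.trans hi.symm⟩, hs]
  · have hes : eraseLeader i j a s = a s := if_neg hs
    rw [insertLeader, hes, hi, if_neg]
    -- otherwise `a s = a j > i` would also be the value at `i`
    rintro ⟨hsi, hsj⟩
    have his : i ≤ a s := hsj ▸ (hij.lt.trans_le (ha.le_apply j)).le
    exact hs ((ha.apply_eq hsi his).symm.trans hai)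

lemma bijOn_insertLeader (hij : i ⋖ j) :
    Set.BijOn (insertLeader i) {b | IsLeaderFn b ∧ b i ≠ i} {a | IsLeaderFn a ∧ a i = i} :=
  Set.InvOn.bijOn (f' := eraseLeader i j)
    ⟨fun _ hb => eraseLeader_insertLeader hb.1 hb.2 hij,
      fun _ ha => insertLeader_eraseLeader ha.1 ha.2 hij⟩
    (fun _ hb => ⟨hb.1.insertLeader i, insertLeader_self _⟩)
    (fun _ ha => ⟨ha.1.eraseLeader hij, eraseLeader_self_ne ha.1 ha.2 hij⟩)

lemma dedup_map_insertLeader [DecidableEq α] {b : α → α} (hb : IsLeaderFn b) (hbi : b i ≠ i)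
    (hij : i ⋖ j) {l : List α} (hl : ∀ x ∈ l, i < x) (hj : j ∈ l) :
    ((i :: l).map (insertLeader i b)).dedup = i :: ((i :: l).map b).dedup := by
  have hfix : ∀ x ∈ l, insertLeader i b x = b x := fun x hx => if_neg fun h => (hl x hx).not_ge h.1
  have hi : i ∉ l.map b := by
    simp only [List.mem_map, not_exists, not_and]
    exact fun x hx hbx => ((hl x hx).trans_le (hb.le_apply x)).ne' hbx
  have hbi_mem : b i ∈ l.map b := List.mem_map.2 ⟨j, hj, hb.apply_eq_of_covBy hbi hij⟩
  rw [List.map_cons, List.map_cons, insertLeader_self, List.map_congr_left hfix,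
    List.dedup_cons_of_notMem hi, List.dedup_cons_of_mem hbi_mem]

end InsertErase

theorem IsFirstAlive.map_dedup_filter_eq_cons [Fintype α] [DecidableEq α]
    {beh : Perm α → α → α} (hbeh : IsFirstAlive beh) {i j : α} (hij : i ⋖ j) {l : List α}
    (hl : ∀ x ∈ l, i < x) (hj : j ∈ l) :
    (((Finset.univ.image beh).filter fun b => b i = i).val.map fun b => ((i :: l).map b).dedup)
      = (((Finset.univ.image beh).filter fun b => b i ≠ i).val.map
          fun b => ((i :: l).map b).dedup).map (List.cons i) := by
  have hmem : ∀ b, b ∈ Finset.univ.image beh ↔ IsLeaderFn b := fun b => by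
    simp [← Set.mem_range, hbeh.range_eq]
  have hbij := bijOn_insertLeader hij
  have himage : ((Finset.univ.image beh).filter fun b => b i = i)
      = ((Finset.univ.image beh).filter fun b => b i ≠ i).image (insertLeader i) := by
    apply Finset.coe_injective
    simpa [Set.sep_mem_eq, hmem] using hbij.image_eq.symm
  rw [himage, Finset.image_val_of_injOn (by simpa [hmem] using hbij.injOn), Multiset.map_map,
    Multiset.map_map]
  refine Multiset.map_congr rfl fun b hb => ?_
  obtain ⟨hb, hbi⟩ := Finset.mem_filter.1 hb
  simp only [comp_apply]
  exact dedup_map_insertLeader ((hmem b).1 hb) hbi hij hl hj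

/-- **Decomposition of the group of the dying expert.**  Experts die in order,
one per night: on day `t` the alive experts are those `e` with `t ≤ e`, and the
next expert to die is `e_t = ⟨t, _⟩`.  With `λ(b, t)` the deduplicated list of
predictions of behavior `b` from day `t` on, the multiset of reduced behaviors
of effective orderings predicting `e_t` at day `t` equals `e_t` prepended to
the multiset of reduced behaviors of effective orderings predicting some later
expert at day `t`; in particular the two groups have the same cardinality. -/
theorem dying_group_decomposition (K t : ℕ) (ht : t + 1 < K)
    (beh : Equiv.Perm (Fin K) → Fin K → Fin K)
    (hbeh : ∀ (π : Equiv.Perm (Fin K)) (s : Fin K),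
      (s : ℕ) ≤ (beh π s : ℕ) ∧
      ∀ e : Fin K, (s : ℕ) ≤ (e : ℕ) → π.symm (beh π s) ≤ π.symm e) :
    (Multiset.map (fun b : Fin K → Fin K => (((List.finRange K).drop t).map b).dedup)
        ((((Finset.univ : Finset (Equiv.Perm (Fin K))).image beh).filter
          (fun b => b ⟨t, by omega⟩ = ⟨t, by omega⟩)).val)
      = Multiset.map (fun l : List (Fin K) => (⟨t, by omega⟩ : Fin K) :: l)
          (Multiset.map
            (fun b : Fin K → Fin K => (((List.finRange K).drop t).map b).dedup)
            ((((Finset.univ : Finset (Equiv.Perm (Fin K))).image beh).filter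
              (fun b => b ⟨t, by omega⟩ ≠ ⟨t, by omega⟩)).val))) ∧
    ((((Finset.univ : Finset (Equiv.Perm (Fin K))).image beh).filter
        (fun b => b ⟨t, by omega⟩ = ⟨t, by omega⟩)).card
      = Multiset.card
          (Multiset.map
            (fun b : Fin K → Fin K => (((List.finRange K).drop t).map b).dedup)
            ((((Finset.univ : Finset (Equiv.Perm (Fin K))).image beh).filter
              (fun b => b ⟨t, by omega⟩ ≠ ⟨t, by omega⟩)).val))) := by
  have hij : (⟨t, by omega⟩ : Fin K) ⋖ ⟨t + 1, ht⟩ :=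
    Fin.covBy_iff.2 (Nat.covBy_iff_add_one_eq.2 rfl)
  have hdecomp := IsFirstAlive.map_dedup_filter_eq_cons hbeh hij
    (fun x hx => Nat.lt_of_succ_le (List.mem_drop_finRange.1 hx)) (List.mem_drop_finRange.2 le_rfl)
  rw [← List.drop_finRange_eq_cons] at hdecomp
  refine ⟨hdecomp, ?_⟩
  rw [Finset.card_def, ← Multiset.card_map, hdecomp, Multiset.card_map]
end
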